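/- arXiv:2603.22067 — 3 statements merged into one kernel-verified Lean document; each statement's English description precedes it below -/
import Mathlib

section
/- Let 0 < d < n and let Γ ⊂ ℝⁿ be d-Ahlfors regular with constant A. Then there exist constants c₁, c₂ > 0 depending only on A, d and n such that for every ξ ∈ Γ and all r, R with 0 < r ≤ R < 2·diam Γ, the Lebesgue measure of {y ∈ B(ξ,R) : dist(y,Γ) < r} satisfies c₁·R^d·r^{n−d} ≤ |{y ∈ B(ξ,R) : dist(y,Γ) < r}| ≤ c₂·R^d·r^{n−d}. -/
open MeasureTheory Metric Set Filter
open scoped ENNReal NNReal Topology RealInnerProductSpace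

noncomputable section

namespace Paper

/-- Euclidean space `ℝⁿ`. -/
abbrev Euc (n : ℕ) : Type := EuclideanSpace ℝ (Fin n)

variable {n : ℕ}

/-- `δ(x)`: the distance from `x` to the boundary of `Ω`. -/
def bd (Ω : Set (Euc n)) (x : Euc n) : ℝ := Metric.infDist x (frontier Ω)

/-- `σ`: the `d`-dimensional Hausdorff measure on `ℝⁿ`. -/
def hm (n : ℕ) (d : ℝ) : Measure (Euc n) := μH[d]

/-- `Γ ⊆ ℝⁿ` is `d`-Ahlfors regular with constant `A`:
`(1/A) rᵈ ≤ σ(B(ξ,r) ∩ Γ) ≤ A rᵈ` for all `ξ ∈ Γ` and `0 < r ≤ diam Γ`. -/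
def AhlforsRegular (d A : ℝ) (Γ : Set (Euc n)) : Prop :=
  Γ.Nonempty ∧ 0 < A ∧
    ∀ ξ ∈ Γ, ∀ r : ℝ, 0 < r → ENNReal.ofReal r ≤ EMetric.diam Γ →
      ENNReal.ofReal (r ^ d / A) ≤ hm n d (Metric.ball ξ r ∩ Γ) ∧
        hm n d (Metric.ball ξ r ∩ Γ) ≤ ENNReal.ofReal (A * r ^ d)

/-- A `λ`-carrot path from `x ∈ ∂Ω` to `y ∈ Ω`: a rectifiable curve, parameterized by
arc length (hence `1`-Lipschitz), from `x` to `y`, staying in `Ω ∪ {x}`, with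
`δ(ζ(t)) ≥ λ t`. -/
def IsCarrotPath (Ω : Set (Euc n)) (lam : ℝ) (x y : Euc n) : Prop :=
  ∃ (T : ℝ) (ζ : ℝ → Euc n), 0 ≤ T ∧ ζ 0 = x ∧ ζ T = y ∧
    LipschitzOnWith 1 ζ (Set.Icc 0 T) ∧
    (∀ t ∈ Set.Icc (0 : ℝ) T, ζ t ∈ Ω ∪ {x}) ∧
    (∀ t ∈ Set.Icc (0 : ℝ) T, lam * t ≤ bd Ω (ζ t))

/-- `y ∈ Ω` is a `(θ,λ,N)`-weak local John point. -/
def IsWLJPoint (Ω : Set (Euc n)) (d θ lam N : ℝ) (y : Euc n) : Prop :=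
  ∃ F : Set (Euc n), MeasurableSet F ∧
    F ⊆ Metric.ball y (N * bd Ω y) ∩ frontier Ω ∧
    ENNReal.ofReal θ * hm n d (Metric.ball y (N * bd Ω y) ∩ frontier Ω) ≤ hm n d F ∧
    ∀ x ∈ F, IsCarrotPath Ω lam x y

/-- The weak local John condition with specified parameters. -/
def WeakLocalJohnWith (Ω : Set (Euc n)) (d θ lam N : ℝ) : Prop :=
  0 < θ ∧ θ ≤ 1 ∧ 0 < lam ∧ lam ≤ 1 ∧ 2 ≤ N ∧ ∀ y ∈ Ω, IsWLJPoint Ω d θ lam N y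

/-- `Ω` is a weak local John domain. -/
def WeakLocalJohn (Ω : Set (Euc n)) (d : ℝ) : Prop :=
  ∃ θ lam N : ℝ, WeakLocalJohnWith Ω d θ lam N

/-- The interior corkscrew condition. -/
def InteriorCorkscrew (Ω : Set (Euc n)) : Prop :=
  ∃ ε : ℝ, 0 < ε ∧ ε < 1 ∧ ∀ x ∈ frontier Ω, ∀ r : ℝ, 0 < r →
    ENNReal.ofReal r < EMetric.diam Ω →
    ∃ z : Euc n, z ∈ Metric.ball x r ∧ Metric.ball z (ε * r) ⊆ Ω

/-- The Harnack chain condition. -/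
def HarnackChainCond (Ω : Set (Euc n)) : Prop :=
  ∃ (M m : ℝ) (Nf : ℝ → ℕ), 1 ≤ M ∧ 0 < m ∧ m < 1 ∧
    ∀ x ∈ Ω, ∀ y ∈ Ω,
      ∃ (N : ℕ) (c : Fin (N + 1) → Euc n) (r : Fin (N + 1) → ℝ),
        N ≤ Nf (dist x y / min (bd Ω x) (bd Ω y)) ∧
        x ∈ Metric.ball (c 0) (r 0) ∧ y ∈ Metric.ball (c (Fin.last N)) (r (Fin.last N)) ∧
        (∀ i : Fin N,
          (Metric.ball (c i.castSucc) (r i.castSucc) ∩ Metric.ball (c i.succ) (r i.succ)).Nonempty) ∧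
        ∀ i : Fin (N + 1), 0 < r i ∧ Metric.ball (c i) (r i) ⊆ Ω ∧
          m * (2 * r i) ≤ bd Ω (c i) - r i ∧ bd Ω (c i) - r i ≤ M * (2 * r i)

/-- The weighted ellipticity conditions
`λ δ(x)^{d+1-n} |ξ|² ≤ ξ·A(x)ξ` and `|η·A(x)ξ| ≤ Λ δ(x)^{d+1-n} |ξ||η|` on `Ω`. -/
def WeaklyElliptic (Ω : Set (Euc n)) (d lam Lam : ℝ)
    (A : Euc n → Euc n →L[ℝ] Euc n) : Prop :=
  0 < lam ∧ lam ≤ Lam ∧ (∀ v : Euc n, Measurable fun x => A x v) ∧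
    ∀ x ∈ Ω, ∀ ξ η : Euc n,
      lam * bd Ω x ^ (d + 1 - (n : ℝ)) * ‖ξ‖ ^ 2 ≤ ⟪ξ, A x ξ⟫ ∧
      |⟪η, A x ξ⟫| ≤ Lam * bd Ω x ^ (d + 1 - (n : ℝ)) * ‖ξ‖ * ‖η‖

/-- A test function on the open set `Ψ`: smooth, compactly supported, support inside `Ψ`. -/
def IsTestOn (Ψ : Set (Euc n)) (φ : Euc n → ℝ) : Prop :=
  ContDiff ℝ (⊤ : ℕ∞) φ ∧ HasCompactSupport φ ∧ tsupport φ ⊆ Ψ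

/-- `g` is the weak gradient of `u` on `Ψ`:
`∫_Ψ u ∂ᵥφ = −∫_Ψ ⟪g,v⟫ φ` for all test functions `φ` and directions `v`. -/
def HasWeakGradOn (u : Euc n → ℝ) (g : Euc n → Euc n) (Ψ : Set (Euc n)) : Prop :=
  LocallyIntegrableOn u Ψ volume ∧ LocallyIntegrableOn g Ψ volume ∧
    ∀ φ : Euc n → ℝ, IsTestOn Ψ φ → ∀ v : Euc n,
      (∫ x in Ψ, u x * fderiv ℝ φ x v) = -∫ x in Ψ, ⟪g x, v⟫ * φ x

/-- Weak formulation of `− div A ∇u = − div H` in `Ψ`, where `g` is the weak gradient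
of `u`. -/
def WeakSolOn (Ψ : Set (Euc n)) (A : Euc n → Euc n →L[ℝ] Euc n)
    (u : Euc n → ℝ) (g H : Euc n → Euc n) : Prop :=
  HasWeakGradOn u g Ψ ∧ LocallyIntegrableOn H Ψ volume ∧
    ∀ φ : Euc n → ℝ, IsTestOn Ψ φ →
      (∫ x in Ψ, ⟪gradient φ x, A x (g x)⟫) = ∫ x in Ψ, ⟪gradient φ x, H x⟫

/-- `Tr u(ξ) = 0` in the averaged sense: `r^{-n} ∫_{B(ξ,r)∩Ω} |u| → 0` as `r → 0⁺`. -/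
def TrZeroAt (Ω : Set (Euc n)) (u : Euc n → ℝ) (ξ : Euc n) : Prop :=
  Tendsto (fun r : ℝ => (1 / r ^ n) * ∫ x in Metric.ball ξ r ∩ Ω, |u x|)
    (𝓝[>] 0) (𝓝 0)

/-- The Whitney average `W_{c,β} f (y) = (⨍_{B(y, c δ(y))} |f|^β)^{1/β}`
(essential supremum if `β = ∞`), as an extended nonnegative real. -/
def wAvg (Ω : Set (Euc n)) (c : ℝ) (β : ℝ≥0∞) {F : Type*} [NormedAddCommGroup F]
    (f : Euc n → F) (y : Euc n) : ℝ≥0∞ :=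
  eLpNorm f β
    ((volume (Metric.ball y (c * bd Ω y)))⁻¹ • volume.restrict (Metric.ball y (c * bd Ω y)))

/-- The weighted averaged norm `‖f‖_{L^p_{av,c,β,s}(Ψ;Ω)}`:
`(∫_Ψ (W_{c,β}f)^p δ^{d-n+p-ps})^{1/p}`, `sup_Ψ (W_{c,β}f) δ^{1-s}` if `p = ∞`. -/
def avNormOn (Ω Ψ : Set (Euc n)) (d c : ℝ) (β p : ℝ≥0∞) (s : ℝ)
    {F : Type*} [NormedAddCommGroup F] (f : Euc n → F) : ℝ≥0∞ :=
  if p = ⊤ then ⨆ y ∈ Ψ, wAvg Ω c β f y * ENNReal.ofReal (bd Ω y) ^ (1 - s)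
  else (∫⁻ y in Ψ, wAvg Ω c β f y ^ p.toReal *
      ENNReal.ofReal (bd Ω y) ^ (d - n + p.toReal - p.toReal * s)) ^ (1 / p.toReal)

/-- The weighted averaged norm `‖f‖_{L^p_{av,c,β,s}(Ω)}`. -/
def avNorm (Ω : Set (Euc n)) (d c : ℝ) (β p : ℝ≥0∞) (s : ℝ)
    {F : Type*} [NormedAddCommGroup F] (f : Euc n → F) : ℝ≥0∞ :=
  avNormOn Ω Ω d c β p s f

/-- `f ∈ L^β_loc(Ω)`. -/
def MemLLoc (Ω : Set (Euc n)) (β : ℝ≥0∞) {F : Type*} [NormedAddCommGroup F]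
    (f : Euc n → F) : Prop :=
  AEStronglyMeasurable f (volume.restrict Ω) ∧
    ∀ K : Set (Euc n), K ⊆ Ω → IsCompact K → eLpNorm f β (volume.restrict K) < ⊤

/-- The nontangential cone `γ_a(ξ) = {x ∈ Ω : |x − ξ| < (1+a) δ(x)}`. -/
def ntCone (Ω : Set (Euc n)) (a : ℝ) (ξ : Euc n) : Set (Euc n) :=
  {x | x ∈ Ω ∧ dist x ξ < (1 + a) * bd Ω x}

/-- The nontangential maximal function `N_a f (ξ) = esssup_{γ_a(ξ)} |f|`. -/
def ntMax (Ω : Set (Euc n)) (a : ℝ) {F : Type*} [NormedAddCommGroup F]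
    (f : Euc n → F) (ξ : Euc n) : ℝ≥0∞ :=
  essSup (fun x => (‖f x‖₊ : ℝ≥0∞)) (volume.restrict (ntCone Ω a ξ))

/-- The `L^q` norm of an `ℝ≥0∞`-valued function. -/
def lqNormE (q : ℝ≥0∞) {α : Type*} [MeasurableSpace α] (μ : Measure α)
    (f : α → ℝ≥0∞) : ℝ≥0∞ :=
  if q = ⊤ then essSup f μ else (∫⁻ x, f x ^ q.toReal ∂μ) ^ (1 / q.toReal)

/-- `Tr_{a,c} u (x) = U`: `x` is in the closure of its nontangential cone, and the
Whitney averages of `|u − U|` tend to `0` nontangentially. -/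
def HasNTTrace (Ω : Set (Euc n)) (a c : ℝ) (u : Euc n → ℝ) (x : Euc n) (U : ℝ) : Prop :=
  x ∈ closure (ntCone Ω a x) ∧
    Tendsto (fun y => wAvg Ω c 1 (fun z => u z - U) y) (𝓝[ntCone Ω a x] x) (𝓝 0)


/-- disjoint balls: sum of measures bounded by measure of a container. -/
lemma sum_ball_le (μ : Measure (Euc n)) (T : Finset (Euc n)) {s : ℝ}
    (hsep : ∀ x ∈ T, ∀ y ∈ T, x ≠ y → 2 * s ≤ dist x y)
    {U : Set (Euc n)} (hU : ∀ t ∈ T, ball t s ⊆ U) :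
    ∑ t ∈ T, μ (ball t s) ≤ μ U := by
  have hdisj : Set.PairwiseDisjoint (↑T : Set (Euc n)) (fun t => ball t s) := by
    intro x hx y hy hxy
    refine Set.disjoint_left.2 fun z hzx hzy => ?_
    have h1 : dist x y ≤ dist x z + dist z y := dist_triangle _ _ _
    have hx' := mem_ball'.1 hzx
    have hy' : dist z y < s := mem_ball.1 hzy
    have := hsep x hx y hy hxy
    linarith
  rw [← measure_biUnion_finset hdisj (fun t _ => measurableSet_ball)]
  exact measure_mono (Set.iUnion₂_subset hU)

/-- volume of a Euclidean ball -/
lemma vol_ball (x : Euc n) {s : ℝ} (hs : 0 < s) :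
    volume (ball x s) = ENNReal.ofReal (s ^ n) * volume (ball (0 : Euc n) 1) := by
  have := Measure.addHaar_ball_of_pos (volume : Measure (Euc n)) x hs
  rwa [finrank_euclideanSpace_fin] at this

/-- counting separated points in a ball by volume -/
lemma card_sep_le (T : Finset (Euc n)) {s ρ : ℝ} (hs : 0 < s) (hρ : 0 < ρ)
    (hsep : ∀ x ∈ T, ∀ y ∈ T, x ≠ y → 2 * s ≤ dist x y)
    {x₀ : Euc n} (hT : ∀ t ∈ T, t ∈ ball x₀ ρ) :
    (T.card : ℝ) * s ^ n ≤ (ρ + s) ^ n := by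
  have hsub : ∀ t ∈ T, ball t s ⊆ ball x₀ (ρ + s) := by
    intro t ht z hz
    have h1 := mem_ball.1 (hT t ht)
    have h2 := mem_ball.1 hz
    have : dist z x₀ ≤ dist z t + dist t x₀ := dist_triangle _ _ _
    exact mem_ball.2 (by linarith)
  have key := sum_ball_le (volume : Measure (Euc n)) T hsep hsub
  rw [vol_ball x₀ (by linarith)] at key
  have heq : ∀ t ∈ T, volume (ball t s) = ENNReal.ofReal (s ^ n) * volume (ball (0 : Euc n) 1) :=
    fun t _ => vol_ball t hs
  rw [Finset.sum_congr rfl heq, Finset.sum_const, nsmul_eq_mul] at key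
  have hω0 : volume (ball (0 : Euc n) 1) ≠ 0 := (measure_ball_pos _ _ one_pos).ne'
  have hωt : volume (ball (0 : Euc n) 1) ≠ ⊤ := measure_ball_lt_top.ne
  have key2 : (T.card : ℝ≥0∞) * ENNReal.ofReal (s ^ n) ≤ ENNReal.ofReal ((ρ + s) ^ n) := by
    refine (ENNReal.mul_le_mul_iff_left hω0 hωt).1 ?_
    rw [mul_assoc]; exact key
  have hcast : (T.card : ℝ≥0∞) * ENNReal.ofReal (s ^ n) = ENNReal.ofReal ((T.card : ℝ) * s ^ n) := by
    rw [ENNReal.ofReal_mul (by positivity), ENNReal.ofReal_natCast]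
  rw [hcast] at key2
  exact (ENNReal.ofReal_le_ofReal_iff (by positivity)).1 key2

/-- existence of a maximal r-separated finite net of a set contained in a ball -/
lemma exists_net {x₀ : Euc n} {ρ r : ℝ} (hr : 0 < r) (hρ : 0 < ρ) (S : Set (Euc n))
    (hS : S ⊆ ball x₀ ρ) :
    ∃ T : Finset (Euc n), ↑T ⊆ S ∧ (∀ x ∈ T, ∀ y ∈ T, x ≠ y → r ≤ dist x y) ∧
      ∀ s ∈ S, ∃ t ∈ T, dist s t < r := by
  classical
  set 𝒮 : Set (Set (Euc n)) :=
    {M | M ⊆ S ∧ ∀ x ∈ M, ∀ y ∈ M, x ≠ y → r ≤ dist x y} with h𝒮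
  obtain ⟨M, -, hMmax⟩ := zorn_subset_nonempty 𝒮 (fun c hc hchain _ => by
    refine ⟨⋃₀ c, ⟨?_, ?_⟩, fun s hs => subset_sUnion_of_mem hs⟩
    · exact sUnion_subset fun m hm => (hc hm).1
    · intro x hx y hy hxy
      obtain ⟨mx, hmx, hxm⟩ := hx
      obtain ⟨my, hmy, hym⟩ := hy
      rcases hchain.total hmx hmy with h | h
      · exact (hc hmy).2 x (h hxm) y hym hxy
      · exact (hc hmx).2 x hxm y (h hym) hxy) ∅ ⟨empty_subset _, by simp⟩
  have hMS : M ⊆ S := hMmax.prop.1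
  have hMsep : ∀ x ∈ M, ∀ y ∈ M, x ≠ y → r ≤ dist x y := hMmax.prop.2
  -- M is finite: separated subsets of a ball have card ≤ K
  have hcard : ∀ F : Finset (Euc n), ↑F ⊆ M → (F.card : ℝ) * (r/2) ^ n ≤ (ρ + r/2) ^ n := by
    intro F hF
    refine card_sep_le F (by linarith) hρ ?_ (fun t ht => hS (hMS (hF ht)))
    intro x hx y hy hxy
    have := hMsep x (hF hx) y (hF hy) hxy
    linarith
  have hMfin : M.Finite := by
    by_contra hinf
    have hinf' : M.Infinite := hinf
    obtain ⟨F, hFM, hFcard⟩ :=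
      Set.Infinite.exists_subset_card_eq hinf' (Nat.ceil ((ρ + r/2)^n / ((r/2)^n)) + 1)
    have h1 := hcard F hFM
    have hpow : (0:ℝ) < (r/2)^n := by positivity
    have h2 : (F.card : ℝ) ≤ (ρ + r/2)^n / ((r/2)^n) := by
      rw [le_div_iff₀ hpow]; exact h1
    have h3 : (F.card : ℝ) ≤ (Nat.ceil ((ρ + r/2)^n / ((r/2)^n)) : ℝ) :=
      h2.trans (Nat.le_ceil _)
    have h4 : F.card ≤ Nat.ceil ((ρ + r/2)^n / ((r/2)^n)) := by exact_mod_cast h3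
    omega
  refine ⟨hMfin.toFinset, by simpa using hMS, ?_, ?_⟩
  · intro x hx y hy hxy
    exact hMsep x (hMfin.mem_toFinset.1 hx) y (hMfin.mem_toFinset.1 hy) hxy
  · intro s hs
    by_contra hno
    push_neg at hno
    have hsM : s ∉ M := fun hsM => by
      have := hno s (hMfin.mem_toFinset.2 hsM)
      simp [dist_self] at this; linarith
    have : insert s M ∈ 𝒮 := by
      refine ⟨insert_subset hs hMS, ?_⟩
      intro x hx y hy hxy
      rcases hx with rfl | hx
      · rcases hy with rfl | hy
        · exact absurd rfl hxy
        · exact hno y (hMfin.mem_toFinset.2 hy)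
      · rcases hy with rfl | hy
        · have := hno x (hMfin.mem_toFinset.2 hx); rwa [dist_comm] at this
        · exact hMsep x hx y hy hxy
    have := hMmax.eq_of_subset this (subset_insert _ _)
    exact hsM (this ▸ mem_insert s M)

/-- Global (all radii) upper regularity bound. -/
lemma global_upper {d A₀ : ℝ} (hd0 : 0 < d) {Γ : Set (Euc n)}
    (hΓ : AhlforsRegular d A₀ Γ) (hdpos : 0 < EMetric.diam Γ)
    {x : Euc n} (hx : x ∈ Γ) {ρ : ℝ} (hρ : 0 < ρ) :
    hm n d (ball x ρ ∩ Γ) ≤ ENNReal.ofReal ((24:ℝ)^n * max A₀ 1 * ρ ^ d) := by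
  classical
  obtain ⟨hne, hA, hreg⟩ := hΓ
  have hB : A₀ ≤ max A₀ 1 := le_max_left _ _
  have hB1 : (1:ℝ) ≤ max A₀ 1 := le_max_right _ _
  have h24 : (1:ℝ) ≤ (24:ℝ)^n := one_le_pow₀ (by norm_num)
  have hρd : (0:ℝ) ≤ ρ ^ d := Real.rpow_nonneg hρ.le d
  by_cases hcase : ENNReal.ofReal ρ ≤ EMetric.diam Γ
  · refine ((hreg x hx ρ hρ hcase).2).trans (ENNReal.ofReal_le_ofReal ?_)
    calc A₀ * ρ ^ d ≤ max A₀ 1 * ρ ^ d := by nlinarith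
      _ ≤ (24:ℝ)^n * max A₀ 1 * ρ ^ d := by
          have h0 : (0:ℝ) ≤ max A₀ 1 * ρ ^ d := by positivity
          nlinarith
  · push_neg at hcase
    have hfin : EMetric.diam Γ ≠ ⊤ := (hcase.trans_le le_top).ne
    set D : ℝ := (EMetric.diam Γ).toReal with hD
    have hD0 : 0 < D := ENNReal.toReal_pos hdpos.ne' hfin
    have hDρ : D ≤ ρ := by
      have := (ENNReal.toReal_le_toReal hfin ENNReal.ofReal_ne_top).2 hcase.le
      rwa [ENNReal.toReal_ofReal hρ.le] at this
    have hΓball : Γ ⊆ ball x (2 * D) := by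
      intro y hy
      have h1 : edist y x ≤ EMetric.diam Γ := EMetric.edist_le_diam_of_mem hy hx
      have h2 : dist y x ≤ D := by
        rw [dist_edist]
        exact (ENNReal.toReal_le_toReal (h1.trans_lt (lt_top_iff_ne_top.2 hfin)).ne hfin).2 h1
      exact mem_ball.2 (by linarith)
    obtain ⟨T, hTΓ, hTsep, hTcov⟩ := exists_net (by linarith : (0:ℝ) < D/4)
      (by linarith : (0:ℝ) < 2*D) Γ hΓball
    -- card bound
    have hsep' : ∀ a ∈ T, ∀ b ∈ T, a ≠ b → 2 * (D/8) ≤ dist a b := by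
      intro a ha b hb hab
      have := hTsep a ha b hb hab; linarith
    have hcard := card_sep_le T (by linarith : (0:ℝ) < D/8) (by linarith : (0:ℝ) < 2*D)
      hsep' (fun t ht => hΓball (hTΓ ht))
    have hcard24 : (T.card : ℝ) ≤ (24:ℝ)^n := by
      have hpow : (0:ℝ) < (D/8)^n := by positivity
      have h1 : (2*D + D/8) ^ n ≤ ((24:ℝ) * (D/8)) ^ n := by
        apply pow_le_pow_left₀ (by linarith) (by linarith)
      rw [mul_pow] at h1
      have := hcard.trans h1
      exact le_of_mul_le_mul_right (by linarith [this]) hpow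
    -- covering bound
    have hcov : hm n d Γ ≤ ∑ t ∈ T, hm n d (ball t (D/4) ∩ Γ) := by
      refine (measure_mono ?_).trans (MeasureTheory.measure_biUnion_finset_le _ _)
      intro s hs
      obtain ⟨t, ht, hst⟩ := hTcov s hs
      exact Set.mem_biUnion ht ⟨mem_ball.2 hst, hs⟩
    have hterm : ∀ t ∈ T, hm n d (ball t (D/4) ∩ Γ) ≤ ENNReal.ofReal (A₀ * (D/4) ^ d) := by
      intro t ht
      refine (hreg t (hTΓ ht) (D/4) (by linarith) ?_).2
      calc ENNReal.ofReal (D/4) ≤ ENNReal.ofReal D := ENNReal.ofReal_le_ofReal (by linarith)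
        _ = EMetric.diam Γ := ENNReal.ofReal_toReal hfin
    have hsum : hm n d Γ ≤ ENNReal.ofReal ((24:ℝ)^n * max A₀ 1 * ρ ^ d) := by
      calc hm n d Γ ≤ ∑ t ∈ T, hm n d (ball t (D/4) ∩ Γ) := hcov
        _ ≤ ∑ _t ∈ T, ENNReal.ofReal (A₀ * (D/4) ^ d) := Finset.sum_le_sum hterm
        _ = (T.card : ℝ≥0∞) * ENNReal.ofReal (A₀ * (D/4) ^ d) := by
            rw [Finset.sum_const, nsmul_eq_mul]
        _ = ENNReal.ofReal ((T.card : ℝ) * (A₀ * (D/4) ^ d)) := by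
            rw [← ENNReal.ofReal_natCast T.card, ← ENNReal.ofReal_mul (Nat.cast_nonneg _)]
        _ ≤ ENNReal.ofReal ((24:ℝ)^n * max A₀ 1 * ρ ^ d) := by
            apply ENNReal.ofReal_le_ofReal
            have hd4 : (D/4) ^ d ≤ ρ ^ d :=
              Real.rpow_le_rpow (by linarith) (by linarith) hd0.le
            have hA4 : A₀ * (D/4)^d ≤ (max A₀ 1) * ρ^d := by
              apply mul_le_mul hB hd4 (Real.rpow_nonneg (by linarith) d) (by linarith)
            calc (T.card : ℝ) * (A₀ * (D/4) ^ d) ≤ (24:ℝ)^n * ((max A₀ 1) * ρ^d) := by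
                  apply mul_le_mul hcard24 hA4 (by positivity) (by positivity)
              _ = (24:ℝ)^n * max A₀ 1 * ρ ^ d := by ring
    exact (measure_mono Set.inter_subset_right).trans hsum
/-- Lemma: measure of a neighborhood of an Ahlfors regular set.
If `Γ ⊂ ℝⁿ` is `d`-Ahlfors regular with constant `A₀`, then for `ξ ∈ Γ` and
`0 < r ≤ R < 2 diam Γ`, `|{y ∈ B(ξ,R) : dist(y,Γ) < r}| ≈ R^d r^{n-d}`, with constants
depending only on `A₀`, `d`, `n`. -/
theorem statement_2 (n : ℕ) (d A₀ : ℝ) (hd0 : 0 < d) (hdn : d < n) :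
    ∃ c₁ c₂ : ℝ, 0 < c₁ ∧ 0 < c₂ ∧
      ∀ Γ : Set (Euc n), AhlforsRegular d A₀ Γ →
        ∀ ξ ∈ Γ, ∀ r R : ℝ, 0 < r → r ≤ R →
          ENNReal.ofReal R < 2 * EMetric.diam Γ →
          ENNReal.ofReal (c₁ * (R ^ d * r ^ ((n : ℝ) - d))) ≤
              volume {y : Euc n | y ∈ Metric.ball ξ R ∧ Metric.infDist y Γ < r} ∧
            volume {y : Euc n | y ∈ Metric.ball ξ R ∧ Metric.infDist y Γ < r} ≤
              ENNReal.ofReal (c₂ * (R ^ d * r ^ ((n : ℝ) - d))) := by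
  classical
  set ω : ℝ := (volume (ball (0 : Euc n) 1)).toReal with hω
  have hω0 : 0 < ω := ENNReal.toReal_pos (measure_ball_pos _ _ one_pos).ne'
    measure_ball_lt_top.ne
  have hωE : ENNReal.ofReal ω = volume (ball (0 : Euc n) 1) :=
    ENNReal.ofReal_toReal measure_ball_lt_top.ne
  set B : ℝ := max A₀ 1 with hBdef
  have hB0 : 0 < B := lt_of_lt_of_le one_pos (le_max_right _ _)
  set A' : ℝ := (24:ℝ)^n * B with hA'def
  have hA'0 : 0 < A' := by positivity
  have h2d : (0:ℝ) < (2:ℝ)^d := Real.rpow_pos_of_pos two_pos d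
  refine ⟨ω / (B * A' * (2:ℝ)^d * 2^n), B * A' * (6:ℝ)^d * 2^n * ω, by positivity, by positivity,
    ?_⟩
  intro Γ hΓ ξ hξ r R hr hrR hRdiam
  obtain ⟨hne, hA, hreg⟩ := hΓ
  have hR0 : 0 < R := lt_of_lt_of_le hr hrR
  have hAB : A₀ ≤ B := le_max_left _ _
  -- diameter facts
  have hdpos : 0 < EMetric.diam Γ := by
    rcases eq_or_lt_of_le (zero_le : (0:ℝ≥0∞) ≤ EMetric.diam Γ) with h | h
    · exfalso
      rw [← h, mul_zero] at hRdiam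
      exact absurd hRdiam (by simp)
    · exact h
  have hhalf : ENNReal.ofReal (R/2) ≤ EMetric.diam Γ := by
    by_contra hcon
    push_neg at hcon
    have h2 : 2 * EMetric.diam Γ < 2 * ENNReal.ofReal (R/2) := by
      refine ENNReal.mul_lt_mul_iff_right (by norm_num) (by norm_num) |>.2 hcon
    have h3 : (2 : ℝ≥0∞) * ENNReal.ofReal (R/2) = ENNReal.ofReal R := by
      rw [← ENNReal.ofReal_ofNat 2, ← ENNReal.ofReal_mul (by norm_num)]
      congr 1
      ring
    rw [h3] at h2
    exact absurd (hRdiam.trans h2) (lt_irrefl _)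
  have hr2diam : ENNReal.ofReal (r/2) ≤ EMetric.diam Γ :=
    (ENNReal.ofReal_le_ofReal (by linarith)).trans hhalf
  -- the set E
  set E : Set (Euc n) := {y : Euc n | y ∈ Metric.ball ξ R ∧ Metric.infDist y Γ < r} with hEdef
  have hEmeas : MeasurableSet E := by
    have : E = ball ξ R ∩ {y : Euc n | Metric.infDist y Γ < r} := rfl
    rw [this]
    exact (isOpen_ball.inter ((isOpen_lt (continuous_infDist_pt Γ) continuous_const))).measurableSet
  -- global upper regularity
  have GU : ∀ x ∈ Γ, ∀ ρ : ℝ, 0 < ρ → hm n d (ball x ρ ∩ Γ) ≤ ENNReal.ofReal (A' * ρ ^ d) := by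
    intro x hx ρ hρ
    exact global_upper hd0 ⟨hne, hA, hreg⟩ hdpos hx hρ
  -- atoms for the real algebra
  set X : ℝ := R ^ d with hX
  set Y : ℝ := r ^ d with hY
  set Z : ℝ := r ^ ((n:ℕ) : ℝ) with hZ
  have hX0 : 0 < X := Real.rpow_pos_of_pos hR0 d
  have hY0 : 0 < Y := Real.rpow_pos_of_pos hr d
  have hZ0 : 0 < Z := Real.rpow_pos_of_pos hr _
  have hZY : r ^ ((n : ℝ) - d) = Z / Y := Real.rpow_sub hr _ _
  have hrn : ∀ s : ℝ, 0 < s → s ^ (n:ℕ) = s ^ ((n:ℕ):ℝ) := fun s hs =>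
    (Real.rpow_natCast s n).symm
  constructor
  · -- LOWER BOUND
    obtain ⟨T, hTS, hTsep, hTcov⟩ := exists_net hr (by linarith : (0:ℝ) < R/2)
      (ball ξ (R/2) ∩ Γ) inter_subset_left
    have hTΓ : ∀ t ∈ T, t ∈ Γ := fun t ht => (hTS ht).2
    -- sigma lower bound on the small ball
    have hσlow : ENNReal.ofReal ((R/2) ^ d / B) ≤ hm n d (ball ξ (R/2) ∩ Γ) := by
      refine le_trans (ENNReal.ofReal_le_ofReal ?_) (hreg ξ hξ (R/2) (by linarith) hhalf).1
      gcongr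
    -- sigma upper bound via the net
    have hσup : hm n d (ball ξ (R/2) ∩ Γ) ≤ (T.card : ℝ≥0∞) * ENNReal.ofReal (A' * r ^ d) := by
      have hsub : ball ξ (R/2) ∩ Γ ⊆ ⋃ t ∈ T, (ball t r ∩ Γ) := by
        intro s hs
        obtain ⟨t, ht, hst⟩ := hTcov s hs
        exact Set.mem_biUnion ht ⟨mem_ball.2 hst, hs.2⟩
      calc hm n d (ball ξ (R/2) ∩ Γ) ≤ ∑ t ∈ T, hm n d (ball t r ∩ Γ) :=
            (measure_mono hsub).trans (MeasureTheory.measure_biUnion_finset_le _ _)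
        _ ≤ ∑ _t ∈ T, ENNReal.ofReal (A' * r ^ d) :=
            Finset.sum_le_sum fun t ht => GU t (hTΓ t ht) r hr
        _ = (T.card : ℝ≥0∞) * ENNReal.ofReal (A' * r ^ d) := by
            rw [Finset.sum_const, nsmul_eq_mul]
    -- real count inequality
    have hcount : (R/2) ^ d / B ≤ (T.card : ℝ) * (A' * r ^ d) := by
      have := hσlow.trans hσup
      rw [← ENNReal.ofReal_natCast T.card, ← ENNReal.ofReal_mul (Nat.cast_nonneg _)] at this
      exact (ENNReal.ofReal_le_ofReal_iff (by positivity)).1 this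
    -- volume lower bound
    have hvol : (T.card : ℝ≥0∞) * ENNReal.ofReal ((r/2)^(n:ℕ) * ω) ≤ volume E := by
      have hsub : ∀ t ∈ T, ball t (r/2) ⊆ E := by
        intro t ht y hy
        have h1 : dist y t < r/2 := mem_ball.1 hy
        have h2 : dist t ξ < R/2 := mem_ball.1 (hTS ht).1
        have h3 : dist y ξ ≤ dist y t + dist t ξ := dist_triangle _ _ _
        refine ⟨mem_ball.2 (by linarith), ?_⟩
        have h4 : Metric.infDist y Γ ≤ dist y t := Metric.infDist_le_dist_of_mem (hTS ht).2
        linarith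
      have hsep2 : ∀ x ∈ T, ∀ y ∈ T, x ≠ y → 2 * (r/2) ≤ dist x y := by
        intro x hx y hy hxy
        have := hTsep x hx y hy hxy; linarith
      have key := sum_ball_le (volume : Measure (Euc n)) T hsep2 (U := E)
        (hU := hsub)
      calc (T.card : ℝ≥0∞) * ENNReal.ofReal ((r/2)^(n:ℕ) * ω)
          = ∑ _t ∈ T, ENNReal.ofReal ((r/2)^(n:ℕ) * ω) := by
            rw [Finset.sum_const, nsmul_eq_mul]
        _ = ∑ t ∈ T, volume (ball t (r/2)) := by
            refine Finset.sum_congr rfl fun t _ => ?_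
            rw [vol_ball t (by linarith : (0:ℝ) < r/2), ENNReal.ofReal_mul (by positivity), hωE]
        _ ≤ volume E := key
    -- combine
    refine le_trans ?_ hvol
    rw [← ENNReal.ofReal_natCast T.card, ← ENNReal.ofReal_mul (Nat.cast_nonneg _)]
    apply ENNReal.ofReal_le_ofReal
    -- pure real algebra
    set N : ℝ := (T.card : ℝ) with hN
    have hN0 : 0 ≤ N := Nat.cast_nonneg _
    have hR2d : (R/2) ^ d = X / (2:ℝ)^d := by
      rw [hX, Real.div_rpow hR0.le (by norm_num : (0:ℝ) ≤ 2)]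
    have hr2n : (r/2)^(n:ℕ) = Z / 2^(n:ℕ) := by
      rw [hrn (r/2) (by linarith), Real.div_rpow hr.le (by norm_num : (0:ℝ) ≤ 2), hZ]
      rw [Real.rpow_natCast 2 n]
    have hNge : X / ((2:ℝ)^d * B * (A' * Y)) ≤ N := by
      have hc2 : (0:ℝ) < (2:ℝ)^d * B * (A' * Y) := by positivity
      rw [div_le_iff₀ hc2]
      rw [hR2d, div_div, ← hY] at hcount
      have h1 := mul_le_mul_of_nonneg_right hcount
        (le_of_lt (by positivity : (0:ℝ) < (2:ℝ)^d * B))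
      have h2 : X / ((2:ℝ)^d * B) * ((2:ℝ)^d * B) = X := by field_simp
      rw [h2] at h1
      calc X ≤ N * (A' * Y) * ((2:ℝ)^d * B) := h1
        _ = N * ((2:ℝ)^d * B * (A' * Y)) := by ring
    have heq : ω / (B * A' * (2:ℝ)^d * 2^n) * (X * (Z/Y))
        = (X / ((2:ℝ)^d * B * (A' * Y))) * (Z / 2^(n:ℕ) * ω) := by
      field_simp
    rw [hZY, heq, hr2n]
    exact mul_le_mul_of_nonneg_right hNge (by positivity)
  · -- UPPER BOUND
    obtain ⟨T, hTS, hTsep, hTcov⟩ := exists_net hr (by linarith : (0:ℝ) < R + r)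
      (ball ξ (R+r) ∩ Γ) inter_subset_left
    have hTΓ : ∀ t ∈ T, t ∈ Γ := fun t ht => (hTS ht).2
    -- E covered by 2r-balls
    have hEcov : E ⊆ ⋃ t ∈ T, ball t (2*r) := by
      intro y hy
      obtain ⟨x, hxΓ, hxy⟩ := (Metric.infDist_lt_iff hne).1 hy.2
      have hx : x ∈ ball ξ (R+r) ∩ Γ := by
        constructor
        · have h1 : dist y ξ < R := mem_ball.1 hy.1
          have : dist x ξ ≤ dist x y + dist y ξ := dist_triangle _ _ _
          rw [dist_comm] at hxy
          exact mem_ball.2 (by linarith)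
        · exact hxΓ
      obtain ⟨t, ht, hxt⟩ := hTcov x hx
      have : dist y t ≤ dist y x + dist x t := dist_triangle _ _ _
      exact Set.mem_biUnion ht (mem_ball.2 (by linarith))
    -- counting via sigma
    have hcount : (T.card : ℝ≥0∞) * ENNReal.ofReal ((r/2) ^ d / B)
        ≤ ENNReal.ofReal (A' * (3*R) ^ d) := by
      have hsep2 : ∀ x ∈ T, ∀ y ∈ T, x ≠ y → 2 * (r/2) ≤ dist x y := by
        intro x hx y hy hxy
        have := hTsep x hx y hy hxy; linarith
      have hsub : ∀ t ∈ T, ball t (r/2) ⊆ ball ξ (3*R) := by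
        intro t ht y hy
        have h1 : dist y t < r/2 := mem_ball.1 hy
        have h2 : dist t ξ < R + r := mem_ball.1 (hTS ht).1
        have h3 : dist y ξ ≤ dist y t + dist t ξ := dist_triangle _ _ _
        exact mem_ball.2 (by linarith)
      have key := sum_ball_le ((hm n d).restrict Γ) T hsep2 (U := ball ξ (3*R))
        (hU := hsub)
      rw [Measure.restrict_apply measurableSet_ball] at key
      have key2 : ∑ t ∈ T, ((hm n d).restrict Γ) (ball t (r/2))
          = ∑ t ∈ T, hm n d (ball t (r/2) ∩ Γ) :=
        Finset.sum_congr rfl fun t _ => Measure.restrict_apply measurableSet_ball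
      rw [key2] at key
      calc (T.card : ℝ≥0∞) * ENNReal.ofReal ((r/2) ^ d / B)
          = ∑ _t ∈ T, ENNReal.ofReal ((r/2) ^ d / B) := by
            rw [Finset.sum_const, nsmul_eq_mul]
        _ ≤ ∑ t ∈ T, hm n d (ball t (r/2) ∩ Γ) := by
            refine Finset.sum_le_sum fun t ht => ?_
            refine le_trans (ENNReal.ofReal_le_ofReal ?_)
              (hreg t (hTΓ t ht) (r/2) (by linarith) hr2diam).1
            gcongr
        _ ≤ hm n d (ball ξ (3*R) ∩ Γ) := key
        _ ≤ ENNReal.ofReal (A' * (3*R) ^ d) := GU ξ hξ (3*R) (by linarith)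
    have hcountR : (T.card : ℝ) * ((r/2) ^ d / B) ≤ A' * (3*R) ^ d := by
      rw [← ENNReal.ofReal_natCast T.card, ← ENNReal.ofReal_mul (Nat.cast_nonneg _)] at hcount
      exact (ENNReal.ofReal_le_ofReal_iff (by positivity)).1 hcount
    -- volume upper bound
    have hvol : volume E ≤ (T.card : ℝ≥0∞) * ENNReal.ofReal ((2*r)^(n:ℕ) * ω) := by
      calc volume E ≤ ∑ t ∈ T, volume (ball t (2*r)) :=
            (measure_mono hEcov).trans (MeasureTheory.measure_biUnion_finset_le _ _)
        _ = ∑ _t ∈ T, ENNReal.ofReal ((2*r)^(n:ℕ) * ω) := by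
            refine Finset.sum_congr rfl fun t _ => ?_
            rw [vol_ball t (by linarith : (0:ℝ) < 2*r), ENNReal.ofReal_mul (by positivity), hωE]
        _ = (T.card : ℝ≥0∞) * ENNReal.ofReal ((2*r)^(n:ℕ) * ω) := by
            rw [Finset.sum_const, nsmul_eq_mul]
    refine hvol.trans ?_
    rw [← ENNReal.ofReal_natCast T.card, ← ENNReal.ofReal_mul (Nat.cast_nonneg _)]
    apply ENNReal.ofReal_le_ofReal
    -- real algebra
    set N : ℝ := (T.card : ℝ) with hN
    have hN0 : 0 ≤ N := Nat.cast_nonneg _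
    have hr2d : (r/2) ^ d = Y / (2:ℝ)^d := by
      rw [hY, Real.div_rpow hr.le (by norm_num : (0:ℝ) ≤ 2)]
    have h3Rd : (3*R) ^ d = (3:ℝ)^d * X := by
      rw [hX, Real.mul_rpow (by norm_num : (0:ℝ) ≤ 3) hR0.le]
    have h2rn : (2*r)^(n:ℕ) = 2^(n:ℕ) * Z := by
      rw [hrn (2*r) (by linarith), Real.mul_rpow (by norm_num : (0:ℝ) ≤ 2) hr.le, hZ]
      rw [Real.rpow_natCast 2 n]
    have h6d : (6:ℝ)^d = (2:ℝ)^d * (3:ℝ)^d := by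
      rw [show (6:ℝ) = 2 * 3 by norm_num, Real.mul_rpow (by norm_num) (by norm_num)]
    have h3d : (0:ℝ) < (3:ℝ)^d := Real.rpow_pos_of_pos (by norm_num) d
    have hNle : N ≤ B * (A' * ((3:ℝ)^d * X)) * (2:ℝ)^d / Y := by
      rw [le_div_iff₀ hY0]
      rw [hr2d, h3Rd] at hcountR
      rw [div_div] at hcountR
      have hc : (0:ℝ) < (2:ℝ)^d * B := by positivity
      have h1 := mul_le_mul_of_nonneg_right hcountR hc.le
      have h2 : N * (Y / ((2:ℝ)^d * B)) * ((2:ℝ)^d * B) = N * Y := by field_simp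
      rw [h2] at h1
      calc N * Y ≤ A' * ((3:ℝ)^d * X) * ((2:ℝ)^d * B) := h1
        _ = B * (A' * ((3:ℝ)^d * X)) * (2:ℝ)^d := by ring
    have heq : B * A' * (6:ℝ)^d * 2^n * ω * (X * (Z/Y))
        = (B * (A' * ((3:ℝ)^d * X)) * (2:ℝ)^d / Y) * (2^(n:ℕ) * Z * ω) := by
      rw [h6d]
      field_simp
    rw [hZY, heq, h2rn]
    calc N * (2^(n:ℕ) * Z * ω)
        ≤ (B * (A' * ((3:ℝ)^d * X)) * (2:ℝ)^d / Y) * (2^(n:ℕ) * Z * ω) :=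
          mul_le_mul_of_nonneg_right hNle (by positivity)

end Paper
end
end

section
/- Let Ω ⊊ ℝⁿ be a nonempty proper open set and let κ > 0 and τ > 0. For each R ∈ G_κ(Ω) let Δ_R = B(ξ_R, τ·diam R) ∩ ∂Ω, where ξ_R ∈ ∂Ω satisfies dist(ξ_R,R) = dist(∂Ω,R). Then there is a constant C depending only on κ, τ and n such that for every x ∈ ∂Ω and every j ∈ ℤ, the set {R ∈ G_κ(Ω) : ℓ(R) = 2^j and x ∈ Δ_R} contains at most C elements. -/
open MeasureTheory Metric Set Filter
open scoped ENNReal NNReal Topology RealInnerProductSpace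

noncomputable section

namespace Paper

variable {n : ℕ}

/-- The dyadic cube `[j₁2^k,(j₁+1)2^k) × ⋯ × [jₙ2^k,(jₙ+1)2^k)`. -/
def dyCube {n : ℕ} (k : ℤ) (j : Fin n → ℤ) : Set (Euc n) :=
  {x | ∀ i : Fin n, (j i : ℝ) * 2 ^ k ≤ x i ∧ x i < ((j i : ℝ) + 1) * 2 ^ k}

/-- Index of the dyadic parent of the dyadic cube indexed by `(k, j)`. -/
def dyParent {n : ℕ} (k : ℤ) (j : Fin n → ℤ) : ℤ × (Fin n → ℤ) :=
  (k + 1, fun i => Int.fdiv (j i) 2)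

/-- Distance between two sets. -/
def setDist {n : ℕ} (s t : Set (Euc n)) : ℝ :=
  (⨅ x ∈ s, EMetric.infEdist x t).toReal

/-- The cube indexed by `(k,j)` belongs to the Whitney decomposition `G_κ(Ω)`:
`dist(Q,∂Ω) > κ diam Q` and `dist(P(Q),∂Ω) ≤ κ diam P(Q)`. -/
def inWhitney {n : ℕ} (Ω : Set (Euc n)) (κ : ℝ) (k : ℤ) (j : Fin n → ℤ) : Prop :=
  κ * Metric.diam (dyCube k j) < setDist (dyCube k j) (frontier Ω) ∧
  setDist (dyCube (dyParent k j).1 (dyParent k j).2) (frontier Ω) ≤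
    κ * Metric.diam (dyCube (dyParent k j).1 (dyParent k j).2)

/-- The center `x_Q` of the dyadic cube indexed by `(k,j)`. -/
def dyCenter {n : ℕ} (k : ℤ) (j : Fin n → ℤ) : Euc n :=
  (EuclideanSpace.equiv (Fin n) ℝ).symm fun i => ((j i : ℝ) + 1 / 2) * 2 ^ k

/-- The `K`-fold dilate `KQ = {x_Q + K (y - x_Q) : y ∈ Q}` of the dyadic cube
indexed by `(k,j)`. -/
def dyDilate {n : ℕ} (K : ℝ) (k : ℤ) (j : Fin n → ℤ) : Set (Euc n) :=
  (fun y => dyCenter k j + K • (y - dyCenter k j)) '' dyCube k j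

section Statement5Helpers

variable {n : ℕ}

lemma abs_coord_le_dist (x y : Euc n) (i : Fin n) : |x i - y i| ≤ dist x y := by
  have h1 : dist (x i) (y i) ^ 2 ≤ ∑ j, dist (x j) (y j) ^ 2 :=
    Finset.single_le_sum (f := fun j => dist (x j) (y j) ^ 2) (fun j _ => sq_nonneg _)
      (Finset.mem_univ i)
  have h2 := Real.sqrt_le_sqrt h1
  rwa [Real.sqrt_sq dist_nonneg, ← EuclideanSpace.dist_eq, Real.dist_eq] at h2

lemma dist_le_sqrt_mul (x y : Euc n) (b : ℝ) (hb : 0 ≤ b)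
    (h : ∀ i, |x i - y i| ≤ b) : dist x y ≤ Real.sqrt n * b := by
  rw [EuclideanSpace.dist_eq]
  have h1 : ∑ i, dist (x i) (y i) ^ 2 ≤ (n : ℝ) * b ^ 2 := by
    calc ∑ i, dist (x i) (y i) ^ 2 ≤ ∑ _i : Fin n, b ^ 2 :=
          Finset.sum_le_sum fun i _ => by
            rw [Real.dist_eq]
            exact pow_le_pow_left₀ (abs_nonneg _) (h i) 2
      _ = (n : ℝ) * b ^ 2 := by simp [Finset.card_univ]
  calc Real.sqrt (∑ i, dist (x i) (y i) ^ 2) ≤ Real.sqrt ((n : ℝ) * b ^ 2) :=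
        Real.sqrt_le_sqrt h1
    _ = Real.sqrt n * b := by
        rw [Real.sqrt_mul (Nat.cast_nonneg n), Real.sqrt_sq hb]

/-- The corner of a dyadic cube. -/
def dyCorner (k : ℤ) (j : Fin n → ℤ) : Euc n :=
  (EuclideanSpace.equiv (Fin n) ℝ).symm fun i => (j i : ℝ) * 2 ^ k

lemma dyCorner_apply (k : ℤ) (j : Fin n → ℤ) (i : Fin n) :
    dyCorner k j i = (j i : ℝ) * 2 ^ k := rfl

lemma dyCorner_mem (k : ℤ) (j : Fin n → ℤ) : dyCorner k j ∈ dyCube k j := by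
  intro i
  rw [dyCorner_apply]
  have h2k : (0 : ℝ) < 2 ^ k := by positivity
  exact ⟨le_refl _, by nlinarith⟩

lemma dyCube_coord_dist {k : ℤ} {j : Fin n → ℤ} {y z : Euc n}
    (hy : y ∈ dyCube k j) (hz : z ∈ dyCube k j) (i : Fin n) :
    |y i - z i| ≤ 2 ^ k := by
  obtain ⟨a1, a2⟩ := hy i
  obtain ⟨b1, b2⟩ := hz i
  have e : ((j i : ℝ) + 1) * 2 ^ k = (j i : ℝ) * 2 ^ k + 2 ^ k := by ring
  rw [e] at a2 b2
  rw [abs_le]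
  constructor <;> linarith

lemma dyCube_dist_le {k : ℤ} {j : Fin n → ℤ} {y z : Euc n}
    (hy : y ∈ dyCube k j) (hz : z ∈ dyCube k j) :
    dist y z ≤ Real.sqrt n * 2 ^ k :=
  dist_le_sqrt_mul y z _ (by positivity) fun i => dyCube_coord_dist hy hz i

lemma diam_dyCube_le (k : ℤ) (j : Fin n → ℤ) :
    Metric.diam (dyCube k j) ≤ Real.sqrt n * 2 ^ k :=
  Metric.diam_le_of_forall_dist_le (by positivity) fun y hy z hz => dyCube_dist_le hy hz

lemma ediam_dyCube_le (k : ℤ) (j : Fin n → ℤ) :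
    EMetric.diam (dyCube k j) ≤ ENNReal.ofReal (Real.sqrt n * 2 ^ k) :=
  EMetric.diam_le fun y hy z hz => by
    rw [edist_dist]
    exact ENNReal.ofReal_le_ofReal (dyCube_dist_le hy hz)

lemma dyCube_subset_parent (k : ℤ) (j : Fin n → ℤ) :
    dyCube k j ⊆ dyCube (k + 1) fun i => Int.fdiv (j i) 2 := by
  intro y hy i
  obtain ⟨h1, h2⟩ := hy i
  have hfd : Int.fdiv (j i) 2 = j i / 2 := Int.fdiv_eq_ediv_of_nonneg _ (by norm_num)
  have hmod := Int.emod_nonneg (j i) (by norm_num : (2 : ℤ) ≠ 0)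
  have hmod2 := Int.emod_lt_of_pos (j i) (by norm_num : (0 : ℤ) < 2)
  have hdm := Int.mul_ediv_add_emod (j i) 2
  have hlo : 2 * (j i / 2) ≤ j i := by omega
  have hhi : j i + 1 ≤ 2 * (j i / 2) + 2 := by omega
  have hloR : 2 * ((j i / 2 : ℤ) : ℝ) ≤ (j i : ℝ) := by exact_mod_cast hlo
  have hhiR : (j i : ℝ) + 1 ≤ 2 * ((j i / 2 : ℤ) : ℝ) + 2 := by exact_mod_cast hhi
  have h2k : (0 : ℝ) < 2 ^ k := by positivity
  have hpow : (2 : ℝ) ^ (k + 1) = 2 ^ k * 2 := by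
    rw [zpow_add_one₀ (two_ne_zero)]
  dsimp only
  rw [hfd]
  constructor
  · rw [hpow]; nlinarith
  · rw [hpow]; nlinarith

lemma setDist_parent_bound {Ω : Set (Euc n)} (hfr : (frontier Ω).Nonempty)
    (k : ℤ) (j : Fin n → ℤ) :
    setDist (dyCube k j) (frontier Ω) ≤
      setDist (dyCube (k + 1) fun i => Int.fdiv (j i) 2) (frontier Ω) +
        Real.sqrt n * 2 ^ (k + 1) := by
  set P := dyCube (k + 1) fun i => Int.fdiv (j i) 2 with hP
  set q := dyCorner k j with hq
  have hqQ : q ∈ dyCube k j := dyCorner_mem k j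
  have hqP : q ∈ P := dyCube_subset_parent k j hqQ
  set D : ℝ≥0∞ := ENNReal.ofReal (Real.sqrt n * 2 ^ (k + 1)) with hD
  have h1 : EMetric.infEdist q (frontier Ω) ≤
      (⨅ p ∈ P, EMetric.infEdist p (frontier Ω)) + D := by
    have hstep : ∀ p ∈ P, EMetric.infEdist q (frontier Ω) ≤
        EMetric.infEdist p (frontier Ω) + D := by
      intro p hp
      refine EMetric.infEdist_le_infEdist_add_edist.trans (add_le_add_right ?_ _)
      rw [edist_dist]
      exact ENNReal.ofReal_le_ofReal
        (dist_le_sqrt_mul q p _ (by positivity) fun i => dyCube_coord_dist hqP hp i)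
    calc EMetric.infEdist q (frontier Ω)
        ≤ ⨅ p ∈ P, (EMetric.infEdist p (frontier Ω) + D) := le_iInf₂ hstep
      _ = (⨅ p ∈ P, EMetric.infEdist p (frontier Ω)) + D := by
          rw [iInf_subtype', iInf_subtype', ← ENNReal.iInf_add]
  have hfin : (⨅ p ∈ P, EMetric.infEdist p (frontier Ω)) ≠ ⊤ :=
    ne_top_of_le_ne_top (Metric.infEdist_ne_top hfr) (iInf₂_le q hqP)
  have h2 : setDist (dyCube k j) (frontier Ω) ≤ (EMetric.infEdist q (frontier Ω)).toReal :=
    ENNReal.toReal_mono (Metric.infEdist_ne_top hfr) (iInf₂_le q hqQ)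
  calc setDist (dyCube k j) (frontier Ω)
      ≤ (EMetric.infEdist q (frontier Ω)).toReal := h2
    _ ≤ ((⨅ p ∈ P, EMetric.infEdist p (frontier Ω)) + D).toReal :=
        ENNReal.toReal_mono (ENNReal.add_ne_top.2 ⟨hfin, ENNReal.ofReal_ne_top⟩) h1
    _ = setDist P (frontier Ω) + Real.sqrt n * 2 ^ (k + 1) := by
        rw [ENNReal.toReal_add hfin ENNReal.ofReal_ne_top,
          ENNReal.toReal_ofReal (by positivity)]
        rfl

end Statement5Helpers

/-- bounded overlap of boundary balls associated to Whitney cubes. -/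
theorem statement_5 (n : ℕ) (κ τ : ℝ) (hκ : 0 < κ) (hτ : 0 < τ) :
    ∃ C : ℕ, ∀ Ω : Set (Euc n), IsOpen Ω → Ω.Nonempty → Ω ≠ Set.univ →
      ∀ ξsel : ℤ → (Fin n → ℤ) → Euc n,
        (∀ (k : ℤ) (j : Fin n → ℤ), inWhitney Ω κ k j →
          ξsel k j ∈ frontier Ω ∧
            Metric.infDist (ξsel k j) (dyCube k j) = setDist (dyCube k j) (frontier Ω)) →
        ∀ x ∈ frontier Ω, ∀ k : ℤ,
          {j : Fin n → ℤ | inWhitney Ω κ k j ∧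
              x ∈ Metric.ball (ξsel k j) (τ * Metric.diam (dyCube k j))}.Finite ∧
            {j : Fin n → ℤ | inWhitney Ω κ k j ∧
              x ∈ Metric.ball (ξsel k j) (τ * Metric.diam (dyCube k j))}.ncard ≤ C := by
  classical
  set M : ℝ := Real.sqrt n * (τ + 2 * κ + 3) with hM
  set L : ℕ := ⌈M⌉₊ with hL
  refine ⟨(2 * L + 1) ^ n, ?_⟩
  intro Ω hΩo hΩne hΩuniv ξsel hξ x hx k
  have hfr : (frontier Ω).Nonempty := ⟨x, hx⟩
  have h2k : (0 : ℝ) < 2 ^ k := by positivity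
  have hsqrt : (0 : ℝ) ≤ Real.sqrt n := Real.sqrt_nonneg _
  set c : Fin n → ℤ := fun i => ⌊x i / 2 ^ k⌋ with hc
  set S : Set (Fin n → ℤ) := {j : Fin n → ℤ | inWhitney Ω κ k j ∧
      x ∈ Metric.ball (ξsel k j) (τ * Metric.diam (dyCube k j))} with hS
  set T : Set (Fin n → ℤ) :=
    Set.univ.pi (fun i => (↑(Finset.Icc (c i - (L : ℤ)) (c i + (L : ℤ))) : Set ℤ)) with hT
  have hsub : S ⊆ T := by
    intro j hj
    obtain ⟨hW, hb⟩ := hj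
    obtain ⟨hξmem, hξdist⟩ := hξ k j hW
    set q := dyCorner k j with hq
    -- dist (ξ) (corner) ≤ setDist Q ∂Ω + √n 2^k
    have key1 : dist (ξsel k j) q ≤
        setDist (dyCube k j) (frontier Ω) + Real.sqrt n * 2 ^ k := by
      have h1 : edist (ξsel k j) q ≤
          EMetric.infEdist (ξsel k j) (dyCube k j) + ENNReal.ofReal (Real.sqrt n * 2 ^ k) :=
        (EMetric.edist_le_infEdist_add_ediam (dyCorner_mem k j)).trans
          (add_le_add_right (ediam_dyCube_le k j) _)
      have hne : EMetric.infEdist (ξsel k j) (dyCube k j) ≠ ⊤ :=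
        Metric.infEdist_ne_top ⟨q, dyCorner_mem k j⟩
      have h2 := ENNReal.toReal_mono
        (ENNReal.add_ne_top.2 ⟨hne, ENNReal.ofReal_ne_top⟩) h1
      rw [← dist_edist, ENNReal.toReal_add hne ENNReal.ofReal_ne_top,
        ENNReal.toReal_ofReal (by positivity)] at h2
      calc dist (ξsel k j) q ≤
          Metric.infDist (ξsel k j) (dyCube k j) + Real.sqrt n * 2 ^ k := h2
        _ = setDist (dyCube k j) (frontier Ω) + Real.sqrt n * 2 ^ k := by rw [hξdist]
    -- setDist Q ∂Ω ≤ κ √n 2^(k+1) + √n 2^(k+1)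
    have key2 : setDist (dyCube k j) (frontier Ω) ≤
        κ * (Real.sqrt n * 2 ^ (k + 1)) + Real.sqrt n * 2 ^ (k + 1) := by
      refine (setDist_parent_bound hfr k j).trans (add_le_add_left ?_ _)
      refine hW.2.trans ?_
      exact mul_le_mul_of_nonneg_left (diam_dyCube_le _ _) hκ.le
    have key4 : dist x (ξsel k j) < τ * (Real.sqrt n * 2 ^ k) := by
      have hb' : dist x (ξsel k j) < τ * Metric.diam (dyCube k j) := Metric.mem_ball.mp hb
      exact hb'.trans_le (mul_le_mul_of_nonneg_left (diam_dyCube_le _ _) hτ.le)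
    have hpow : (2 : ℝ) ^ (k + 1) = 2 ^ k * 2 := zpow_add_one₀ two_ne_zero k
    have hxq : dist x q ≤ M * 2 ^ k := by
      calc dist x q ≤ dist x (ξsel k j) + dist (ξsel k j) q := dist_triangle _ _ _
        _ ≤ τ * (Real.sqrt n * 2 ^ k) +
            ((κ * (Real.sqrt n * 2 ^ (k + 1)) + Real.sqrt n * 2 ^ (k + 1)) +
              Real.sqrt n * 2 ^ k) := by
            have := key1.trans (add_le_add_left key2 _)
            linarith [key4.le, this]
        _ = M * 2 ^ k := by rw [hM, hpow]; ring
    -- coordinates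
    intro i _
    have hcoord : |x i - (j i : ℝ) * 2 ^ k| ≤ M * 2 ^ k := by
      have := abs_coord_le_dist x q i
      rw [hq, dyCorner_apply] at this
      rw [hq] at hxq
      exact this.trans hxq
    have hML : M ≤ (L : ℝ) := Nat.le_ceil M
    have hflo : (c i : ℝ) * 2 ^ k ≤ x i := by
      have h := Int.floor_le (x i / 2 ^ k)
      rw [le_div_iff₀ h2k] at h
      exact h
    have hfhi : x i < ((c i : ℝ) + 1) * 2 ^ k := by
      have h := Int.lt_floor_add_one (x i / 2 ^ k)
      rw [div_lt_iff₀ h2k] at h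
      exact_mod_cast h
    obtain ⟨ha, hb2⟩ := abs_le.mp hcoord
    have hlow : ((c i - (L : ℤ) : ℤ) : ℝ) ≤ (j i : ℝ) := by
      have h1 : ((c i : ℝ) - L) * 2 ^ k ≤ (j i : ℝ) * 2 ^ k := by nlinarith
      have := le_of_mul_le_mul_right h1 h2k
      push_cast
      linarith
    have hhigh : (j i : ℝ) < ((c i + (L : ℤ) + 1 : ℤ) : ℝ) := by
      have h1 : (j i : ℝ) * 2 ^ k < ((c i : ℝ) + L + 1) * 2 ^ k := by nlinarith
      have := lt_of_mul_lt_mul_right h1 h2k.le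
      push_cast
      linarith
    have hlow' : c i - (L : ℤ) ≤ j i := by exact_mod_cast hlow
    have hhigh' : j i < c i + (L : ℤ) + 1 := by exact_mod_cast hhigh
    simp only [Finset.coe_Icc, Set.mem_Icc]
    omega
  have hTfin : T.Finite := by
    rw [hT, ← Fintype.coe_piFinset]
    exact (Fintype.piFinset _).finite_toSet
  have hcard : T.ncard = (2 * L + 1) ^ n := by
    rw [hT, ← Fintype.coe_piFinset, Set.ncard_coe_finset, Fintype.card_piFinset]
    have hIcc : ∀ i : Fin n, (Finset.Icc (c i - (L : ℤ)) (c i + (L : ℤ))).card = 2 * L + 1 := by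
      intro i
      rw [Int.card_Icc]
      have : (c i + (L : ℤ) + 1 - (c i - (L : ℤ))) = ((2 * L + 1 : ℕ) : ℤ) := by
        push_cast; ring
      rw [this, Int.toNat_natCast]
    simp [hIcc]
  exact ⟨hTfin.subset hsub, le_of_le_of_eq (Set.ncard_le_ncard hsub hTfin) hcard⟩

end Paper
end
end

section
/- Let Ω ⊂ ℝⁿ be a nonempty proper open set and let 0 < c < 1. Fix d ∈ ℝ, let 1 ≤ β ≤ ∞, 0 < p < q ≤ ∞, and s ∈ ℝ. Then there is a constant C depending only on n, d, c, p, q and s such that every F ∈ L^β_loc(Ω) satisfies ‖F‖_{L^q_{av,c,β,s+d/q−d/p}(Ω)} ≤ C·‖F‖_{L^p_{av,c,β,s}(Ω)}; in particular L^p_{av,c,β,s}(Ω) ⊂ L^q_{av,c,β,s+d/q−d/p}(Ω). -/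
open MeasureTheory Metric Set Filter
open scoped ENNReal NNReal Topology RealInnerProductSpace

noncomputable section

namespace Paper

variable {n : ℕ}

/-! ### Auxiliary lemmas for Statement 8 -/

section Statement8Aux

variable {n : ℕ}

lemma aux_frontier_nonempty {Ω : Set (Euc n)} (h1 : Ω.Nonempty) (h2 : Ω ≠ Set.univ) :
    (frontier Ω).Nonempty :=
  nonempty_frontier_iff.2 ⟨h1, h2⟩

lemma aux_bd_pos {Ω : Set (Euc n)} (hΩ : IsOpen Ω) (h1 : Ω.Nonempty) (h2 : Ω ≠ Set.univ)
    {y : Euc n} (hy : y ∈ Ω) : 0 < bd Ω y := by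
  have hfr := aux_frontier_nonempty h1 h2
  have hnm : y ∉ frontier Ω := by
    rw [hΩ.frontier_eq]; exact fun h => h.2 hy
  exact (isClosed_frontier.notMem_iff_infDist_pos hfr).1 hnm

lemma aux_ball_bd_subset {Ω : Set (Euc n)} (h2 : Ω ≠ Set.univ)
    {y : Euc n} (hy : y ∈ Ω) : ball y (bd Ω y) ⊆ Ω := by
  obtain ⟨z, hz, hzd⟩ := exists_mem_frontier_infDist_compl_eq_dist hy h2
  have h : bd Ω y ≤ infDist y Ωᶜ := by
    rw [hzd]; exact infDist_le_dist_of_mem hz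
  exact (ball_subset_ball h).trans ball_infDist_compl_subset

lemma aux_bd_lower {Ω : Set (Euc n)} (x y : Euc n) : bd Ω y - dist x y ≤ bd Ω x := by
  have h := infDist_le_infDist_add_dist (x := y) (y := x) (s := frontier Ω)
  rw [dist_comm] at h
  simp only [bd]; linarith

lemma aux_bd_upper {Ω : Set (Euc n)} (x y : Euc n) : bd Ω x ≤ bd Ω y + dist x y :=
  infDist_le_infDist_add_dist

lemma aux_exists_cover (n : ℕ) {ρ : ℝ} (hρ : 0 < ρ) :
    ∃ T : Finset (Euc n), closedBall (0:Euc n) 1 ⊆ (⋃ w ∈ T, ball w ρ) ∧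
      ∀ w ∈ T, ‖w‖ ≤ 1 := by
  have hc : IsCompact (closedBall (0:Euc n) 1) := isCompact_closedBall _ _
  obtain ⟨b', hb'sub, hb'fin, hb'cov⟩ := hc.elim_finite_subcover_image
    (fun w (_ : w ∈ closedBall (0:Euc n) 1) => isOpen_ball (x := w) (ε := ρ))
    (fun x hx => mem_biUnion hx (mem_ball_self hρ))
  refine ⟨hb'fin.toFinset, ?_, ?_⟩
  · simpa using hb'cov
  · intro w hw
    have h := hb'sub (hb'fin.mem_toFinset.1 hw)
    simpa [mem_closedBall, dist_zero_right] using h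

lemma aux_eLpNorm_add_measure_le {α : Type*} [MeasurableSpace α] {F : Type*}
    [NormedAddCommGroup F] (f : α → F) {β : ℝ≥0∞} (hβ : 1 ≤ β) (μ ν : Measure α) :
    eLpNorm f β (μ + ν) ≤ eLpNorm f β μ + eLpNorm f β ν := by
  have hβ0 : β ≠ 0 := by positivity
  by_cases htop : β = ⊤
  · subst htop
    simp only [eLpNorm_exponent_top, eLpNormEssSup]
    have h1 : ∀ᵐ x ∂μ, (‖f x‖₊ : ℝ≥0∞) ≤ essSup (fun x => (‖f x‖₊ : ℝ≥0∞)) μ := ae_le_essSup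
    have h2 : ∀ᵐ x ∂ν, (‖f x‖₊ : ℝ≥0∞) ≤ essSup (fun x => (‖f x‖₊ : ℝ≥0∞)) ν := ae_le_essSup
    refine essSup_le_of_ae_le _ (ae_add_measure_iff.2 ⟨?_, ?_⟩)
    · exact h1.mono fun x hx => hx.trans le_self_add
    · exact h2.mono fun x hx => hx.trans le_add_self
  · rw [eLpNorm_eq_lintegral_rpow_enorm_toReal hβ0 htop, eLpNorm_eq_lintegral_rpow_enorm_toReal hβ0 htop,
      eLpNorm_eq_lintegral_rpow_enorm_toReal hβ0 htop, lintegral_add_measure]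
    have h1 : (0:ℝ) ≤ 1/β.toReal := by positivity
    have h2 : 1/β.toReal ≤ 1 := by
      have hb1 : 1 ≤ β.toReal := by
        rw [← ENNReal.toReal_one]; exact ENNReal.toReal_mono htop hβ
      rw [div_le_one (by linarith)]; linarith
    exact ENNReal.rpow_add_le_add_rpow _ _ h1 h2

lemma aux_eLpNorm_restrict_biUnion_le {α : Type*} [MeasurableSpace α] {F : Type*}
    [NormedAddCommGroup F] (f : α → F) {β : ℝ≥0∞} (hβ : 1 ≤ β) (μ : Measure α)
    {ι : Type*} [DecidableEq ι] (T : Finset ι) (D : ι → Set α) :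
    eLpNorm f β (μ.restrict (⋃ w ∈ T, D w)) ≤ ∑ w ∈ T, eLpNorm f β (μ.restrict (D w)) := by
  induction T using Finset.induction_on with
  | empty => simp
  | insert a s ha ih =>
    rw [Finset.set_biUnion_insert, Finset.sum_insert ha]
    refine le_trans (eLpNorm_mono_measure f (Measure.restrict_union_le _ _)) ?_
    exact le_trans (aux_eLpNorm_add_measure_le f hβ _ _) (add_le_add le_rfl ih)

/-- normalized local `β`-average over `ball x r` -/
def locAvg (β : ℝ≥0∞) (f : Euc n → ℝ) (x : Euc n) (r : ℝ) : ℝ≥0∞ :=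
  eLpNorm f β ((volume (ball x r))⁻¹ • volume.restrict (ball x r))

lemma aux_wAvg_eq_locAvg (Ω : Set (Euc n)) (c : ℝ) (β : ℝ≥0∞) (f : Euc n → ℝ) (y : Euc n) :
    wAvg Ω c β f y = locAvg β f y (c * bd Ω y) := rfl

lemma aux_volume_ball_pos (x : Euc n) {r : ℝ} (hr : 0 < r) : 0 < volume (ball x r) :=
  measure_ball_pos _ _ hr

lemma aux_volume_ball_ne_top (x : Euc n) (r : ℝ) : volume (ball x r) ≠ ⊤ :=
  measure_ball_lt_top.ne

lemma aux_volume_ball_le_of_le [Nontrivial (Euc n)] (x1 x2 : Euc n) {r1 r2 Kr : ℝ}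
    (hr1 : 0 ≤ r1) (hr2 : 0 ≤ r2) (hK : 0 ≤ Kr) (h : r2 ≤ Kr * r1) :
    volume (ball x2 r2) ≤ ENNReal.ofReal (Kr ^ n) * volume (ball x1 r1) := by
  rw [Measure.addHaar_ball _ _ hr2, Measure.addHaar_ball _ _ hr1,
    finrank_euclideanSpace_fin, ← mul_assoc, ← ENNReal.ofReal_mul (by positivity)]
  refine mul_le_mul_left (ENNReal.ofReal_le_ofReal ?_) _
  rw [← mul_pow]
  exact pow_le_pow_left₀ hr2 h n

lemma aux_toReal_one_div_le_one {β : ℝ≥0∞} (hβ : 1 ≤ β) : (1/β).toReal ≤ 1 := by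
  have h : 1/β ≤ 1 := by simpa using ENNReal.inv_le_one.mpr hβ
  rw [← ENNReal.toReal_one]
  exact ENNReal.toReal_mono ENNReal.one_ne_top h

lemma aux_rpow_le_one_add {x y : ℝ≥0∞} (hxy : x ≤ y) {t : ℝ} (ht0 : 0 ≤ t) (ht1 : t ≤ 1) :
    x ^ t ≤ 1 + y := by
  rcases le_total x 1 with h | h
  · exact (ENNReal.rpow_le_one h ht0).trans le_self_add
  · calc x ^ t ≤ x ^ (1:ℝ) := ENNReal.rpow_le_rpow_of_exponent_le h ht1
      _ = x := ENNReal.rpow_one x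
      _ ≤ 1 + y := hxy.trans le_add_self

lemma aux_eLpNorm_smul_restrict_eq (β : ℝ≥0∞) (f : Euc n → ℝ) (x : Euc n) {r : ℝ} (hr : 0 < r)
    {b : ℝ≥0∞} (hbt : b ≠ ⊤) :
    eLpNorm f β (b⁻¹ • volume.restrict (ball x r))
      = (volume (ball x r) * b⁻¹) ^ (1/β).toReal * locAvg β f x r := by
  set a := volume (ball x r) with ha
  have ha0 : a ≠ 0 := (aux_volume_ball_pos x hr).ne'
  have hat : a ≠ ⊤ := aux_volume_ball_ne_top x r
  have key : b⁻¹ • volume.restrict (ball x r)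
      = (a * b⁻¹) • (a⁻¹ • volume.restrict (ball x r)) := by
    rw [smul_smul]
    congr 1
    rw [mul_comm a b⁻¹, mul_assoc, ENNReal.mul_inv_cancel ha0 hat, mul_one]
  rw [key, eLpNorm_smul_measure_of_ne_zero
    (by simp [ha0, ENNReal.inv_ne_zero, hbt] : a * b⁻¹ ≠ 0)]
  rfl

lemma aux_locAvg_mono_subset [Nontrivial (Euc n)] {β : ℝ≥0∞} (hβ : 1 ≤ β) (f : Euc n → ℝ)
    {x1 x2 : Euc n} {r1 r2 Kr : ℝ} (hr1 : 0 < r1) (hr2 : 0 < r2) (hK : 1 ≤ Kr)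
    (hle : r2 ≤ Kr * r1) (hsub : ball x1 r1 ⊆ ball x2 r2) :
    locAvg β f x1 r1 ≤ ENNReal.ofReal (Kr ^ n) * locAvg β f x2 r2 := by
  set a := volume (ball x1 r1) with ha
  have ha0 : a ≠ 0 := (aux_volume_ball_pos x1 hr1).ne'
  have hat : a ≠ ⊤ := aux_volume_ball_ne_top x1 r1
  have step1 : locAvg β f x1 r1 ≤ eLpNorm f β (a⁻¹ • volume.restrict (ball x2 r2)) := by
    refine eLpNorm_mono_measure f ?_
    intro u
    simp only [Measure.smul_apply, smul_eq_mul]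
    exact mul_le_mul_right (Measure.restrict_mono hsub (le_refl _) u) _
  rw [aux_eLpNorm_smul_restrict_eq β f x2 hr2 hat] at step1
  refine step1.trans (mul_le_mul_left ?_ _)
  have hratio : volume (ball x2 r2) * a⁻¹ ≤ ENNReal.ofReal (Kr ^ n) := by
    have hb := aux_volume_ball_le_of_le x1 x2 hr1.le hr2.le (by linarith) hle
    calc volume (ball x2 r2) * a⁻¹ ≤ (ENNReal.ofReal (Kr ^ n) * a) * a⁻¹ :=
          mul_le_mul_left hb _
      _ = ENNReal.ofReal (Kr ^ n) := by
          rw [mul_assoc, ENNReal.mul_inv_cancel ha0 hat, mul_one]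
  calc (volume (ball x2 r2) * a⁻¹) ^ (1/β).toReal
      ≤ (ENNReal.ofReal (Kr ^ n)) ^ (1/β).toReal :=
        ENNReal.rpow_le_rpow hratio ENNReal.toReal_nonneg
    _ ≤ ENNReal.ofReal (Kr ^ n) := by
        nth_rewrite 2 [← ENNReal.rpow_one (ENNReal.ofReal (Kr ^ n))]
        refine ENNReal.rpow_le_rpow_of_exponent_le ?_ (aux_toReal_one_div_le_one hβ)
        exact ENNReal.one_le_ofReal.mpr (one_le_pow₀ hK)

lemma aux_locAvg_cover [Nontrivial (Euc n)] {β : ℝ≥0∞} (hβ : 1 ≤ β) (f : Euc n → ℝ)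
    {x : Euc n} {r : ℝ} (hr : 0 < r) {ι : Type*} [DecidableEq ι] (T : Finset ι)
    (z : ι → Euc n) (r' : ι → ℝ) (hr' : ∀ w ∈ T, 0 < r' w) {Kr : ℝ} (hK : 0 ≤ Kr)
    (hle : ∀ w ∈ T, r' w ≤ Kr * r)
    (hcov : ball x r ⊆ ⋃ w ∈ T, ball (z w) (r' w)) :
    locAvg β f x r ≤ ∑ w ∈ T, (1 + ENNReal.ofReal (Kr ^ n)) * locAvg β f (z w) (r' w) := by
  set b := volume (ball x r) with hb
  have hb0 : b ≠ 0 := (aux_volume_ball_pos x hr).ne'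
  have hbt : b ≠ ⊤ := aux_volume_ball_ne_top x r
  have hbi0 : b⁻¹ ≠ 0 := ENNReal.inv_ne_zero.2 hbt
  have step1 : locAvg β f x r
      = b⁻¹ ^ (1/β).toReal * eLpNorm f β (volume.restrict (ball x r)) := by
    rw [locAvg, eLpNorm_smul_measure_of_ne_zero hbi0]; rfl
  have step2 : eLpNorm f β (volume.restrict (ball x r))
      ≤ ∑ w ∈ T, eLpNorm f β (volume.restrict (ball (z w) (r' w))) := by
    refine le_trans (eLpNorm_mono_measure f (Measure.restrict_mono hcov (le_refl _))) ?_
    exact aux_eLpNorm_restrict_biUnion_le f hβ volume T _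
  calc locAvg β f x r ≤ b⁻¹ ^ (1/β).toReal *
        ∑ w ∈ T, eLpNorm f β (volume.restrict (ball (z w) (r' w))) := by
        rw [step1]; exact mul_le_mul_right step2 _
    _ = ∑ w ∈ T, b⁻¹ ^ (1/β).toReal * eLpNorm f β (volume.restrict (ball (z w) (r' w))) :=
        Finset.mul_sum _ _ _
    _ ≤ ∑ w ∈ T, (1 + ENNReal.ofReal (Kr ^ n)) * locAvg β f (z w) (r' w) := by
        refine Finset.sum_le_sum fun w hw => ?_
        have h1 : b⁻¹ ^ (1/β).toReal * eLpNorm f β (volume.restrict (ball (z w) (r' w)))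
            = eLpNorm f β (b⁻¹ • volume.restrict (ball (z w) (r' w))) := by
          rw [eLpNorm_smul_measure_of_ne_zero hbi0]; rfl
        rw [h1, aux_eLpNorm_smul_restrict_eq β f (z w) (hr' w hw) hbt]
        refine mul_le_mul_left ?_ _
        refine aux_rpow_le_one_add ?_ ENNReal.toReal_nonneg (aux_toReal_one_div_le_one hβ)
        have hb2 := aux_volume_ball_le_of_le x (z w) hr.le (hr' w hw).le hK (hle w hw)
        calc volume (ball (z w) (r' w)) * b⁻¹ ≤ (ENNReal.ofReal (Kr ^ n) * b) * b⁻¹ :=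
              mul_le_mul_left hb2 _
          _ = ENNReal.ofReal (Kr ^ n) := by
              rw [mul_assoc, ENNReal.mul_inv_cancel hb0 hbt, mul_one]

lemma aux_ofReal_rpow_compare {δ δ' k1 k2 t : ℝ} (hδ : 0 < δ) (hk1 : 0 < k1)
    (h1 : k1 * δ ≤ δ') (h2 : δ' ≤ k2 * δ) :
    ENNReal.ofReal δ' ^ t ≤ ENNReal.ofReal (max (k1 ^ t) (k2 ^ t)) * ENNReal.ofReal δ ^ t := by
  have hδ' : 0 < δ' := lt_of_lt_of_le (by positivity) h1
  have hk2δ : 0 < k2 * δ := lt_of_lt_of_le hδ' h2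
  have hk2 : 0 < k2 := by nlinarith
  rw [ENNReal.ofReal_rpow_of_pos hδ', ENNReal.ofReal_rpow_of_pos hδ,
    ← ENNReal.ofReal_mul (by positivity)]
  refine ENNReal.ofReal_le_ofReal ?_
  rcases le_or_gt 0 t with ht | ht
  · calc δ' ^ t ≤ (k2 * δ) ^ t := Real.rpow_le_rpow hδ'.le h2 ht
      _ = k2 ^ t * δ ^ t := Real.mul_rpow hk2.le hδ.le
      _ ≤ max (k1 ^ t) (k2 ^ t) * δ ^ t :=
          mul_le_mul_of_nonneg_right (le_max_right _ _) (by positivity)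
  · calc δ' ^ t ≤ (k1 * δ) ^ t := Real.rpow_le_rpow_of_nonpos (by positivity) h1 ht.le
      _ = k1 ^ t * δ ^ t := Real.mul_rpow hk1.le hδ.le
      _ ≤ max (k1 ^ t) (k2 ^ t) * δ ^ t :=
          mul_le_mul_of_nonneg_right (le_max_left _ _) (by positivity)

end Statement8Aux

set_option maxHeartbeats 2000000 in
/-- embedding between weighted averaged Lebesgue spaces.
For `0 < p < q ≤ ∞`, `‖F‖_{L^q_{av,c,β,s+d/q-d/p}(Ω)} ≤ C ‖F‖_{L^p_{av,c,β,s}(Ω)}`,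
with `C` depending only on `n`, `d`, `c`, `p`, `q`, `s`. -/
theorem statement_8 (n : ℕ) (d c s : ℝ) (p q : ℝ≥0∞)
    (hc : 0 < c) (hc1 : c < 1) (hp : 0 < p) (hpq : p < q) :
    ∃ C : ℝ, 0 < C ∧
      ∀ Ω : Set (Euc n), IsOpen Ω → Ω.Nonempty → Ω ≠ Set.univ →
        ∀ β : ℝ≥0∞, 1 ≤ β → ∀ F : Euc n → ℝ, MemLLoc Ω β F →
          avNorm Ω d c β q (s + d / q.toReal - d / p.toReal) F ≤
              ENNReal.ofReal C * avNorm Ω d c β p s F ∧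
            (avNorm Ω d c β p s F < ⊤ →
              avNorm Ω d c β q (s + d / q.toReal - d / p.toReal) F < ⊤) := by
  classical
  have hq0 : q ≠ 0 := (hp.trans hpq).ne'
  have hpt : p ≠ ⊤ := hpq.ne_top
  set pr := p.toReal with hprdef
  have hpr0 : 0 < pr := ENNReal.toReal_pos hp.ne' hpt
  -- real parameters
  set ε := c/4 with hεdef
  set c2 := c*(1-c)/2 with hc2def
  set ρ := (1-c)^2/2 with hρdef
  have hε0 : 0 < ε := by rw [hεdef]; linarith
  have hε1 : ε < 1 := by rw [hεdef]; linarith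
  have hc20 : 0 < c2 := by rw [hc2def]; nlinarith
  have hρ0 : 0 < ρ := by rw [hρdef]; nlinarith
  set aa := d - n + pr - pr*s with haadef
  set uu := d/pr + 1 - s with huudef
  have huu : (aa + n)/pr = uu := by
    rw [haadef, huudef]; field_simp; ring
  -- covering points
  obtain ⟨T, hTcov, hTmem⟩ := aux_exists_cover n hρ0
  -- ENNReal constants
  set V := volume (ball (0:Euc n) 1) with hVdef
  have hV0 : V ≠ 0 := (aux_volume_ball_pos _ one_pos).ne'
  have hVt : V ≠ ⊤ := aux_volume_ball_ne_top _ _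
  set K3 : ℝ≥0∞ := 1 + ENNReal.ofReal ((c2*(1+c)/c)^n) with hK3def
  have hK30 : K3 ≠ 0 := by simp [hK3def]
  have hK3t : K3 ≠ ⊤ := by simp [hK3def]
  set K2 : ℝ := c*(1+ε)/c2 with hK2def
  have hK21 : 1 ≤ K2 := by
    rw [hK2def, hc2def, le_div_iff₀ (by nlinarith)]; nlinarith
  set Ma : ℝ≥0∞ := ENNReal.ofReal (max ((1/(1+ε))^aa) ((1/(1-ε))^aa)) with hMadef
  have hMa0 : Ma ≠ 0 := by
    rw [hMadef]
    simp only [ne_eq, ENNReal.ofReal_eq_zero, not_le, lt_max_iff]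
    left; exact Real.rpow_pos_of_pos (by positivity) _
  have hMat : Ma ≠ ⊤ := ENNReal.ofReal_ne_top
  set Mu : ℝ≥0∞ := ENNReal.ofReal (max ((1-c) ^ (-uu)) ((1+c) ^ (-uu))) with hMudef
  have hMu0 : Mu ≠ 0 := by
    rw [hMudef]
    simp only [ne_eq, ENNReal.ofReal_eq_zero, not_le, lt_max_iff]
    left; exact Real.rpow_pos_of_pos (by linarith) _
  have hMut : Mu ≠ ⊤ := ENNReal.ofReal_ne_top
  set EC : ℝ≥0∞ := (ENNReal.ofReal (K2^n))^pr * Ma * (ENNReal.ofReal (ε^n) * V)⁻¹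
    with hECdef
  have hεn0 : ENNReal.ofReal (ε^n) ≠ 0 := by
    simp only [ne_eq, ENNReal.ofReal_eq_zero, not_le]; positivity
  have hK2n0 : ENNReal.ofReal (K2^n) ≠ 0 := by
    simp only [ne_eq, ENNReal.ofReal_eq_zero, not_le]; nlinarith [one_le_pow₀ hK21 (n := n)]
  have hEC0 : EC ≠ 0 := by
    rw [hECdef]
    refine mul_ne_zero (mul_ne_zero ?_ hMa0) ?_
    · simp [ENNReal.rpow_eq_zero_iff, hK2n0, ENNReal.ofReal_ne_top]
    · simp [ENNReal.inv_ne_zero, ENNReal.mul_ne_top, ENNReal.ofReal_ne_top, hVt]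
  have hECt : EC ≠ ⊤ := by
    rw [hECdef]
    refine ENNReal.mul_ne_top (ENNReal.mul_ne_top ?_ hMat) ?_
    · simp [ENNReal.rpow_eq_top_iff, hK2n0, ENNReal.ofReal_ne_top]
    · simp [ENNReal.inv_ne_top, hεn0, hV0]
  set C7 : ℝ≥0∞ := ((T.card : ℝ≥0∞) + 1) * K3 * EC ^ (1/pr) * Mu with hC7def
  have hC70 : C7 ≠ 0 := by
    rw [hC7def]
    refine mul_ne_zero (mul_ne_zero (mul_ne_zero ?_ hK30) ?_) hMu0
    · simp
    · simp [ENNReal.rpow_eq_zero_iff, hEC0, hECt]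
  have hC7t : C7 ≠ ⊤ := by
    rw [hC7def]
    refine ENNReal.mul_ne_top (ENNReal.mul_ne_top (ENNReal.mul_ne_top ?_ hK3t) ?_) hMut
    · simp [ENNReal.add_ne_top]
    · simp [ENNReal.rpow_eq_top_iff, hEC0, hECt]
  set t0 : ℝ := if q = ⊤ then 1 else (q.toReal - pr)/q.toReal with ht0def
  have ht00 : 0 ≤ t0 := by
    rw [ht0def]
    split
    · norm_num
    · rename_i hq
      have hq1 : pr < q.toReal := by
        rw [hprdef]
        exact (ENNReal.toReal_lt_toReal hpt hq).2 hpq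
      have h2 : 0 < q.toReal := hpr0.trans hq1
      exact div_nonneg (by linarith) h2.le
  set 𝒞 : ℝ≥0∞ := C7 ^ t0 with h𝒞def
  have h𝒞0 : 𝒞 ≠ 0 := by simp [h𝒞def, ENNReal.rpow_eq_zero_iff, hC70, hC7t]
  have h𝒞t : 𝒞 ≠ ⊤ := by simp [h𝒞def, ENNReal.rpow_eq_top_iff, hC70, hC7t]
  refine ⟨𝒞.toReal + 1, by positivity, ?_⟩
  intro Ω hΩ hne hproper β hβ F hF
  have h𝒞le : 𝒞 ≤ ENNReal.ofReal (𝒞.toReal + 1) := by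
    calc 𝒞 = ENNReal.ofReal 𝒞.toReal := (ENNReal.ofReal_toReal h𝒞t).symm
      _ ≤ ENNReal.ofReal (𝒞.toReal + 1) := ENNReal.ofReal_le_ofReal (by linarith)
  suffices h : avNorm Ω d c β q (s + d / q.toReal - d / p.toReal) F ≤
      𝒞 * avNorm Ω d c β p s F by
    refine ⟨h.trans (mul_le_mul_left h𝒞le _), fun hfin => ?_⟩
    exact h.trans_lt (ENNReal.mul_lt_top h𝒞t.lt_top hfin)
  -- nontriviality
  have hNT : Nontrivial (Euc n) := by
    by_contra hcon
    rw [not_nontrivial_iff_subsingleton] at hcon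
    obtain ⟨y0, hy0⟩ := hne
    exact hproper (Set.eq_univ_of_forall fun x => by rwa [Subsingleton.elim x y0])
  set D : Euc n → ℝ≥0∞ := fun y => ENNReal.ofReal (bd Ω y) with hDdef
  have hD0 : ∀ y ∈ Ω, D y ≠ 0 := fun y hy => by
    simp [hDdef, ENNReal.ofReal_eq_zero, not_le, aux_bd_pos hΩ hne hproper hy]
  have hDt : ∀ y, D y ≠ ⊤ := fun y => ENNReal.ofReal_ne_top
  set I : ℝ≥0∞ := ∫⁻ y in Ω, wAvg Ω c β F y ^ pr * D y ^ aa with hIdef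
  have hNp_eq : avNorm Ω d c β p s F = I ^ (1/pr) := by
    rw [avNorm, avNormOn, if_neg hpt]
  set Np := avNorm Ω d c β p s F with hNpdef
  -- THE KEY POINTWISE BOUND
  have key : ∀ y ∈ Ω, wAvg Ω c β F y * D y ^ uu ≤ C7 * Np := by
    intro y hy
    set δy := bd Ω y with hδydef
    have hδy0 : 0 < δy := aux_bd_pos hΩ hne hproper hy
    have hcδy0 : 0 < c*δy := by positivity
    set z : Euc n → Euc n := fun w => y + (c*δy) • w with hzdef
    have hzd : ∀ w : Euc n, ‖w‖ ≤ 1 → dist (z w) y ≤ c*δy := by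
      intro w hw
      rw [hzdef]
      simp only [dist_eq_norm, add_sub_cancel_left, norm_smul, Real.norm_eq_abs,
        abs_of_pos hcδy0]
      nlinarith
    have hzΩ : ∀ w ∈ T, z w ∈ Ω := by
      intro w hw
      refine aux_ball_bd_subset hproper hy ?_
      rw [mem_ball]
      calc dist (z w) y ≤ c*δy := hzd w (hTmem w hw)
        _ < δy := mul_lt_of_lt_one_left hδy0 hc1
    have hδz_lb : ∀ w ∈ T, (1-c)*δy ≤ bd Ω (z w) := by
      intro w hw
      have h := aux_bd_lower (Ω := Ω) (z w) y
      have h2 := hzd w (hTmem w hw)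
      rw [← hδydef] at h
      nlinarith
    have hδz_ub : ∀ w ∈ T, bd Ω (z w) ≤ (1+c)*δy := by
      intro w hw
      have h := aux_bd_upper (Ω := Ω) (z w) y
      have h2 := hzd w (hTmem w hw)
      rw [← hδydef] at h
      nlinarith
    have hδz0 : ∀ w ∈ T, 0 < bd Ω (z w) := fun w hw =>
      lt_of_lt_of_le (by nlinarith) (hδz_lb w hw)
    -- the covering of the Whitney ball of y
    have hcov : ball y (c*δy) ⊆ ⋃ w ∈ T, ball (z w) (c2 * bd Ω (z w)) := by
      intro x hx
      have hx' : dist x y < c*δy := mem_ball.1 hx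
      set v : Euc n := (c*δy)⁻¹ • (x - y) with hvdef
      have hv : v ∈ closedBall (0:Euc n) 1 := by
        rw [mem_closedBall, dist_zero_right, hvdef, norm_smul, Real.norm_eq_abs,
          abs_of_pos (by positivity)]
        rw [dist_eq_norm] at hx'
        have h1 : (c*δy)⁻¹ * ‖x - y‖ ≤ (c*δy)⁻¹ * (c*δy) :=
          mul_le_mul_of_nonneg_left hx'.le (by positivity)
        rwa [inv_mul_cancel₀ (ne_of_gt hcδy0)] at h1
      obtain ⟨w, hwT, hwball⟩ : ∃ w ∈ T, v ∈ ball w ρ := by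
        have h := hTcov hv
        simpa using h
      refine mem_biUnion hwT ?_
      rw [mem_ball]
      have hxz : x - z w = (c*δy) • (v - w) := by
        rw [hzdef, hvdef]
        simp only
        rw [smul_sub, smul_inv_smul₀ (ne_of_gt hcδy0)]
        abel
      have hvw : ‖v - w‖ < ρ := by
        rw [← dist_eq_norm]; exact mem_ball.1 hwball
      calc dist x (z w) = ‖x - z w‖ := dist_eq_norm _ _
        _ = (c*δy) * ‖v - w‖ := by
            rw [hxz, norm_smul, Real.norm_eq_abs, abs_of_pos hcδy0]
        _ < (c*δy) * ρ := by nlinarith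
        _ ≤ c2 * bd Ω (z w) := by
            have h3 := hδz_lb w hwT
            rw [hρdef, hc2def]
            nlinarith
    -- Step A : covering bound
    have stepA : wAvg Ω c β F y ≤ ∑ w ∈ T, K3 * locAvg β F (z w) (c2 * bd Ω (z w)) := by
      rw [aux_wAvg_eq_locAvg, ← hδydef]
      have hle : ∀ w ∈ T, c2 * bd Ω (z w) ≤ (c2*(1+c)/c) * (c*δy) := by
        intro w hw
        have h1 : (c2*(1+c)/c) * (c*δy) = c2*(1+c)*δy := by field_simp
        rw [h1]
        have := hδz_ub w hw
        nlinarith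
      have h := aux_locAvg_cover hβ F hcδy0 T z (fun w => c2 * bd Ω (z w))
        (fun w hw => mul_pos hc20 (hδz0 w hw)) (by positivity) hle hcov
      rw [hK3def]
      exact h
    -- Step E : small-average bound at each z w
    have stepE : ∀ w ∈ T, locAvg β F (z w) (c2 * bd Ω (z w))
        ≤ (EC * I) ^ (1/pr) * D (z w) ^ (-uu) := by
      intro w hw
      set v := z w with hvdef2
      set δv := bd Ω v with hδvdef
      have hvΩ : v ∈ Ω := hzΩ w hw
      have hδv0 : 0 < δv := by
        rw [hδvdef, hvdef2]; exact hδz0 w hw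
      set SA := locAvg β F v (c2 * δv) with hSAdef
      have hDv0 : D v ≠ 0 := hD0 v hvΩ
      have hDvt : D v ≠ ⊤ := hDt v
      set X : ℝ≥0∞ := (ENNReal.ofReal (K2^n))^pr * Ma with hXdef
      have hX0 : X ≠ 0 := by
        rw [hXdef]
        exact mul_ne_zero (by simp [ENNReal.rpow_eq_zero_iff, hK2n0, ENNReal.ofReal_ne_top]) hMa0
      have hXt : X ≠ ⊤ := by
        rw [hXdef]
        exact ENNReal.mul_ne_top (by simp [ENNReal.rpow_eq_top_iff, hK2n0, ENNReal.ofReal_ne_top]) hMat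
      -- pointwise lower bound on the small ball around v
      have hGlb : ∀ zz ∈ ball v (ε*δv), X⁻¹ * (SA ^ pr * D v ^ aa)
          ≤ wAvg Ω c β F zz ^ pr * D zz ^ aa := by
        intro zz hzz
        have hdzz : dist zz v < ε*δv := mem_ball.1 hzz
        have hdzz0 : 0 ≤ dist zz v := dist_nonneg
        have hzzΩ : zz ∈ Ω := aux_ball_bd_subset hproper hvΩ (mem_ball.2 (by nlinarith))
        have hδzz_lb : (1-ε)*δv ≤ bd Ω zz := by
          have h := aux_bd_lower (Ω := Ω) zz v
          rw [← hδvdef] at h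
          nlinarith
        have hδzz_ub : bd Ω zz ≤ (1+ε)*δv := by
          have h := aux_bd_upper (Ω := Ω) zz v
          rw [← hδvdef] at h
          nlinarith
        have hδzz0 : 0 < bd Ω zz := lt_of_lt_of_le (by nlinarith) hδzz_lb
        have hsub : ball v (c2*δv) ⊆ ball zz (c * bd Ω zz) := by
          intro x hx
          rw [mem_ball] at hx ⊢
          have htri : dist x zz ≤ dist x v + dist v zz := dist_triangle _ _ _
          rw [dist_comm v zz] at htri
          have hc2ε : c2 + ε ≤ c*(1-ε) := by
            rw [hc2def, hεdef]; nlinarith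
          nlinarith
        have hle2 : c * bd Ω zz ≤ K2 * (c2 * δv) := by
          have h1 : K2 * (c2*δv) = c*(1+ε)*δv := by
            rw [hK2def]; field_simp
          rw [h1]
          nlinarith
        have hmono := aux_locAvg_mono_subset hβ F (mul_pos hc20 hδv0)
          (mul_pos hc hδzz0) hK21 hle2 hsub
        have hwAvg : locAvg β F zz (c * bd Ω zz) = wAvg Ω c β F zz := rfl
        rw [hwAvg] at hmono
        have hDcomp : D v ^ aa ≤ Ma * D zz ^ aa := by
          rw [hMadef, hDdef]
          simp only
          refine aux_ofReal_rpow_compare hδzz0 (by positivity : (0:ℝ) < 1/(1+ε)) ?_ ?_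
          · rw [div_mul_eq_mul_div, div_le_iff₀ (by linarith : (0:ℝ) < 1+ε)]
            nlinarith
          · rw [div_mul_eq_mul_div, le_div_iff₀ (by linarith : (0:ℝ) < 1-ε)]
            nlinarith
        have hcomb : SA ^ pr * D v ^ aa ≤ X * (wAvg Ω c β F zz ^ pr * D zz ^ aa) := by
          calc SA ^ pr * D v ^ aa
              ≤ (ENNReal.ofReal (K2^n) * wAvg Ω c β F zz)^pr * (Ma * D zz ^ aa) :=
                mul_le_mul' (ENNReal.rpow_le_rpow hmono hpr0.le) hDcomp
            _ = X * (wAvg Ω c β F zz ^ pr * D zz ^ aa) := by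
                rw [ENNReal.mul_rpow_of_nonneg _ _ hpr0.le, hXdef]; ring
        calc X⁻¹ * (SA ^ pr * D v ^ aa)
            ≤ X⁻¹ * (X * (wAvg Ω c β F zz ^ pr * D zz ^ aa)) := mul_le_mul_right hcomb _
          _ = wAvg Ω c β F zz ^ pr * D zz ^ aa := by
              rw [← mul_assoc, ENNReal.inv_mul_cancel hX0 hXt, one_mul]
      -- integrate the lower bound
      have hball_sub : ball v (ε*δv) ⊆ Ω := by
        refine (ball_subset_ball ?_).trans (aux_ball_bd_subset hproper hvΩ)
        nlinarith
      have hIlb : (X⁻¹ * (SA ^ pr * D v ^ aa)) * volume (ball v (ε*δv)) ≤ I := by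
        rw [hIdef]
        calc (X⁻¹ * (SA ^ pr * D v ^ aa)) * volume (ball v (ε*δv))
            = ∫⁻ _ in ball v (ε*δv), X⁻¹ * (SA ^ pr * D v ^ aa) := by
              rw [setLIntegral_const]
          _ ≤ ∫⁻ zz in ball v (ε*δv), wAvg Ω c β F zz ^ pr * D zz ^ aa :=
              lintegral_mono_ae ((ae_restrict_iff' measurableSet_ball).2 (ae_of_all _ hGlb))
          _ ≤ ∫⁻ zz in Ω, wAvg Ω c β F zz ^ pr * D zz ^ aa := lintegral_mono_set hball_sub
      have hvol : volume (ball v (ε*δv)) = (ENNReal.ofReal (ε^n) * V) * D v ^ (n:ℝ) := by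
        rw [Measure.addHaar_ball _ _ (by positivity : (0:ℝ) ≤ ε*δv),
          finrank_euclideanSpace_fin, ← hVdef, mul_pow,
          ENNReal.ofReal_mul (by positivity), hDdef]
        simp only
        rw [ENNReal.ofReal_pow hδv0.le, ← ENNReal.rpow_natCast (ENNReal.ofReal δv) n]
        ring
      have hE : SA ^ pr * D v ^ (aa + (n:ℝ)) ≤ EC * I := by
        have h1 : D v ^ (aa + (n:ℝ)) = D v ^ aa * D v ^ (n:ℝ) :=
          ENNReal.rpow_add _ _ hDv0 hDvt
        have hEVt : ENNReal.ofReal (ε^n) * V ≠ ⊤ := ENNReal.mul_ne_top ENNReal.ofReal_ne_top hVt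
        have hEV0 : ENNReal.ofReal (ε^n) * V ≠ 0 := mul_ne_zero hεn0 hV0
        have h2 : SA ^ pr * D v ^ (aa + (n:ℝ))
            = (X * (ENNReal.ofReal (ε^n) * V)⁻¹) *
              ((X⁻¹ * (SA ^ pr * D v ^ aa)) * volume (ball v (ε*δv))) := by
          rw [h1, hvol]
          rw [show (X * (ENNReal.ofReal (ε^n) * V)⁻¹) *
              ((X⁻¹ * (SA ^ pr * D v ^ aa)) * ((ENNReal.ofReal (ε^n) * V) * D v ^ (n:ℝ)))
              = (X * X⁻¹) * ((ENNReal.ofReal (ε^n) * V) * (ENNReal.ofReal (ε^n) * V)⁻¹) *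
                (SA ^ pr * (D v ^ aa * D v ^ (n:ℝ))) by ring,
            ENNReal.mul_inv_cancel hX0 hXt, ENNReal.mul_inv_cancel hEV0 hEVt,
            one_mul, one_mul]
        rw [h2]
        have h3 : EC = X * (ENNReal.ofReal (ε^n) * V)⁻¹ := by
          rw [hECdef, hXdef]
        rw [h3]
        exact mul_le_mul_right hIlb _
      -- solve for SA
      have h2 : SA = (SA ^ pr) ^ (1/pr) := by
        rw [← ENNReal.rpow_mul, mul_one_div, div_self hpr0.ne', ENNReal.rpow_one]
      have hcancel : D v ^ (aa+(n:ℝ)) * D v ^ (-(aa+(n:ℝ))) = 1 := by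
        rw [← ENNReal.rpow_add _ _ hDv0 hDvt, add_neg_cancel, ENNReal.rpow_zero]
      have h3 : SA ^ pr ≤ (EC*I) * D v ^ (-(aa+(n:ℝ))) := by
        calc SA ^ pr = SA ^ pr * (D v ^ (aa+(n:ℝ)) * D v ^ (-(aa+(n:ℝ)))) := by
              rw [hcancel, mul_one]
          _ = SA ^ pr * D v ^ (aa+(n:ℝ)) * D v ^ (-(aa+(n:ℝ))) := by rw [mul_assoc]
          _ ≤ EC * I * D v ^ (-(aa+(n:ℝ))) := mul_le_mul_left hE _
      calc SA = (SA ^ pr) ^ (1/pr) := h2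
        _ ≤ ((EC*I) * D v ^ (-(aa+(n:ℝ)))) ^ (1/pr) :=
            ENNReal.rpow_le_rpow h3 (by positivity)
        _ = (EC*I) ^ (1/pr) * D v ^ (-uu) := by
            rw [ENNReal.mul_rpow_of_nonneg _ _ (by positivity : (0:ℝ) ≤ 1/pr),
              ← ENNReal.rpow_mul]
            congr 1
            rw [show -(aa+(n:ℝ)) * (1/pr) = -((aa+(n:ℝ))/pr) by ring, huu]
    -- comparison of weights at z w and y
    have stepB' : ∀ w ∈ T, D (z w) ^ (-uu) ≤ Mu * D y ^ (-uu) := by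
      intro w hw
      rw [hMudef, hDdef]
      simp only
      exact aux_ofReal_rpow_compare hδy0 (by linarith : (0:ℝ) < 1 - c)
        (hδz_lb w hw) (hδz_ub w hw)
    -- assemble
    have hsum : wAvg Ω c β F y
        ≤ (T.card : ℝ≥0∞) * (K3 * ((EC*I) ^ (1/pr) * (Mu * D y ^ (-uu)))) := by
      refine stepA.trans ?_
      calc ∑ w ∈ T, K3 * locAvg β F (z w) (c2 * bd Ω (z w))
          ≤ ∑ _w ∈ T, K3 * ((EC*I) ^ (1/pr) * (Mu * D y ^ (-uu))) := by
            refine Finset.sum_le_sum fun w hw => mul_le_mul_right ?_ _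
            exact (stepE w hw).trans (mul_le_mul_right (stepB' w hw) _)
        _ = (T.card : ℝ≥0∞) * (K3 * ((EC*I) ^ (1/pr) * (Mu * D y ^ (-uu)))) := by
            rw [Finset.sum_const, nsmul_eq_mul]
    have hDy0 : D y ≠ 0 := hD0 y hy
    have hDyt : D y ≠ ⊤ := hDt y
    have hcancel : D y ^ (-uu) * D y ^ uu = 1 := by
      rw [← ENNReal.rpow_add _ _ hDy0 hDyt, neg_add_cancel, ENNReal.rpow_zero]
    calc wAvg Ω c β F y * D y ^ uu
        ≤ ((T.card : ℝ≥0∞) * (K3 * ((EC*I) ^ (1/pr) * (Mu * D y ^ (-uu))))) * D y ^ uu :=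
          mul_le_mul_left hsum _
      _ = ((T.card : ℝ≥0∞) * K3 * Mu * (EC*I) ^ (1/pr)) * (D y ^ (-uu) * D y ^ uu) := by
          ring
      _ = (T.card : ℝ≥0∞) * K3 * Mu * (EC ^ (1/pr) * I ^ (1/pr)) := by
          rw [hcancel, mul_one,
            ENNReal.mul_rpow_of_nonneg _ _ (by positivity : (0:ℝ) ≤ 1/pr)]
      _ ≤ C7 * Np := by
          rw [hNp_eq, hC7def]
          calc (T.card : ℝ≥0∞) * K3 * Mu * (EC ^ (1/pr) * I ^ (1/pr))
              = ((T.card : ℝ≥0∞) * K3 * EC ^ (1/pr) * Mu) * I ^ (1/pr) := by ring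
            _ ≤ (((T.card : ℝ≥0∞) + 1) * K3 * EC ^ (1/pr) * Mu) * I ^ (1/pr) := by
                refine mul_le_mul_left ?_ _
                refine mul_le_mul_left (mul_le_mul_left (mul_le_mul_left ?_ _) _) _
                exact le_self_add
  -- conclude
  rcases eq_or_ne Np ⊤ with hNp | hNp
  · rw [hNp, ENNReal.mul_top h𝒞0]
    exact le_top
  rcases eq_or_ne q ⊤ with hq | hq
  · subst hq
    rw [avNorm, avNormOn, if_pos rfl]
    have hexp : ∀ y : Euc n, (1 : ℝ) - (s + d / (⊤:ℝ≥0∞).toReal - d / p.toReal) = uu := by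
      intro y
      rw [ENNReal.toReal_top, div_zero, huudef, ← hprdef]; ring
    have h𝒞C7 : 𝒞 = C7 := by
      rw [h𝒞def, ht0def, if_pos rfl, ENNReal.rpow_one]
    rw [h𝒞C7]
    refine iSup₂_le fun y hy => ?_
    rw [hexp y]
    exact key y hy
  · -- finite q case
    set qr := q.toReal with hqrdef
    have hqrpr : pr < qr := by
      rw [hqrdef, hprdef]
      exact (ENNReal.toReal_lt_toReal hpt hq).2 hpq
    have hqr0 : 0 < qr := hpr0.trans hqrpr
    rw [avNorm, avNormOn, if_neg hq]
    have hexp : d - (n:ℝ) + qr - qr*(s + d/qr - d/pr) = uu*(qr - pr) + aa := by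
      rw [huudef, haadef]
      field_simp
      ring
    have hCNt : (C7 * Np) ^ (qr - pr) ≠ ⊤ :=
      ENNReal.rpow_ne_top_of_nonneg (by linarith) (ENNReal.mul_ne_top hC7t hNp)
    have pointwise : ∀ y ∈ Ω, wAvg Ω c β F y ^ qr * D y ^ (d - (n:ℝ) + qr - qr*(s + d/qr - d/pr))
        ≤ (C7 * Np) ^ (qr - pr) * (wAvg Ω c β F y ^ pr * D y ^ aa) := by
      intro y hy
      rw [hexp]
      have h1 : wAvg Ω c β F y ^ qr
          = wAvg Ω c β F y ^ (qr - pr) * wAvg Ω c β F y ^ pr := by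
        rw [← ENNReal.rpow_add_of_nonneg _ _ (by linarith) hpr0.le, sub_add_cancel]
      have h2 : D y ^ (uu*(qr-pr)+aa) = (D y ^ uu)^(qr-pr) * D y ^ aa := by
        rw [ENNReal.rpow_add _ _ (hD0 y hy) (hDt y), ENNReal.rpow_mul]
      have h3 : wAvg Ω c β F y ^ qr * D y ^ (uu*(qr-pr)+aa)
          = (wAvg Ω c β F y * D y ^ uu) ^ (qr - pr) * (wAvg Ω c β F y ^ pr * D y ^ aa) := by
        rw [h1, h2, ENNReal.mul_rpow_of_nonneg _ _ (by linarith : (0:ℝ) ≤ qr - pr)]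
        ring
      rw [h3]
      exact mul_le_mul_left (ENNReal.rpow_le_rpow (key y hy) (by linarith)) _
    have hint : (∫⁻ y in Ω, wAvg Ω c β F y ^ qr *
          ENNReal.ofReal (bd Ω y) ^ (d - (n:ℝ) + qr - qr*(s + d/qr - d/pr)))
        ≤ (C7 * Np) ^ (qr - pr) * I := by
      rw [hIdef, ← lintegral_const_mul' _ _ hCNt]
      refine lintegral_mono_ae ((ae_restrict_iff' hΩ.measurableSet).2 (ae_of_all _ ?_))
      intro y hy
      exact pointwise y hy
    have hI_eq : I = Np ^ pr := by
      rw [hNp_eq, ← ENNReal.rpow_mul, one_div, inv_mul_cancel₀ hpr0.ne', ENNReal.rpow_one]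
    calc (∫⁻ y in Ω, wAvg Ω c β F y ^ qr *
          ENNReal.ofReal (bd Ω y) ^ (d - (n:ℝ) + qr - qr*(s + d/qr - d/pr))) ^ (1/qr)
        ≤ ((C7 * Np) ^ (qr - pr) * I) ^ (1/qr) :=
          ENNReal.rpow_le_rpow hint (by positivity)
      _ = 𝒞 * Np := by
          rw [hI_eq, ENNReal.mul_rpow_of_nonneg _ _ (by linarith : (0:ℝ) ≤ qr - pr),
            mul_assoc, ← ENNReal.rpow_add_of_nonneg _ _ (by linarith) hpr0.le,
            sub_add_cancel,
            ENNReal.mul_rpow_of_nonneg _ _ (by positivity : (0:ℝ) ≤ 1/qr),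
            ← ENNReal.rpow_mul, ← ENNReal.rpow_mul,
            mul_one_div, mul_one_div, div_self hqr0.ne', ENNReal.rpow_one,
            h𝒞def, ht0def, if_neg hq]

end Paper
end
end
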